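/- arXiv:0907.2949 — 3 statements merged into one kernel-verified Lean document; each statement's English description precedes it below -/
import Mathlib

section
/- Let X = {0, 1, …, K} and let Y be the set of 2K+1 intervals { {0}, (0,1), {1}, (1,2), …, {K−1}, (K−1,K), {K} }. The family of functions (f_n : X^n → Y)_{n≥1}, where f_n(x_1, …, x_n) is the unique element of Y containing the average (1/n) Σ_{i=1}^n x_i, is computable. -/
/-- A finite bidirectional connected network on `n` nodes, with port labelings:
each node `i` has a bijection between its neighbors and the port numbers
`{0, …, deg(i) - 1}`. -/
structure PortNetwork (n : ℕ) where
  adj : Fin n → Fin n → Bool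
  symm : ∀ i j, adj i j → adj j i
  loopless : ∀ i, ¬ adj i i
  connected : ∀ i j : Fin n, Relation.ReflTransGen (fun a b => adj a b) i j
  port : ∀ i : Fin n, {j // adj i j} ≃ Fin (Fintype.card {j // adj i j})

/-- The degree of node `i`. -/
def PortNetwork.deg {n : ℕ} (N : PortNetwork n) (i : Fin n) : ℕ :=
  Fintype.card {j // N.adj i j}

/-- An algorithm: a family of transition functions
`A_d : X × Z_d × Y × M^d → Z_d × Y × M^d`, together with the distinguished
initial ("∅") elements of `Z_d`, `Y`, `M`. -/
structure Algorithm (X Y M : Type) (Z : ℕ → Type) where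
  trans : ∀ d : ℕ, X → Z d → Y → (Fin d → M) → Z d × Y × (Fin d → M)
  z0 : ∀ d, Z d
  y0 : Y
  m0 : M

/-- The synchronous evolution of the network: `A.run N x t i` is the state
`(z_i(t), y_i(t), (m_{i,p}(t))_p)` of node `i` at time `t`, starting from
initial values `x`.  At each round, node `i` receives through its `k`-th port
the message sent by the neighbor `j_k` on that port, namely the message that
`j_k` put on its own port leading back to `i`. -/
def Algorithm.run {X Y M : Type} {Z : ℕ → Type} (A : Algorithm X Y M Z) {n : ℕ}
    (N : PortNetwork n) (x : Fin n → X) :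
    ℕ → ∀ i : Fin n, Z (N.deg i) × Y × (Fin (N.deg i) → M)
  | 0 => fun _ => (A.z0 _, A.y0, fun _ => A.m0)
  | t + 1 => fun i =>
      A.trans (N.deg i) (x i) (A.run N x t i).1 (A.run N x t i).2.1
        (fun k =>
          let j := (N.port i).symm k
          (A.run N x t j.1).2.2 (N.port j.1 ⟨i, N.symm _ _ j.2⟩))

/-- `y` is the final output of the execution of `A` on the network `N` with
initial values `x`. -/
def Algorithm.FinalOutput {X Y M : Type} {Z : ℕ → Type} (A : Algorithm X Y M Z) {n : ℕ}
    (N : PortNetwork n) (x : Fin n → X) (y : Y) : Prop :=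
  ∃ t', ∀ t, t' ≤ t → ∀ i, (A.run N x t i).2.1 = y

/-- A family of functions `(f_n : X^n → Y)_{n ≥ 1}` is computable if there is an
algorithm with `Y`, `M` and all `Z_d` finite which, on every connected network
with ports and every input, produces the final output `f_n(x)`. -/
def ComputableFamily {X Y : Type} (f : ∀ n, (Fin n → X) → Y) : Prop :=
  ∃ (M : Type) (Z : ℕ → Type) (A : Algorithm X Y M Z),
    Finite Y ∧ Finite M ∧ (∀ d, Finite (Z d)) ∧
    ∀ n, 0 < n → ∀ (N : PortNetwork n) (x : Fin n → X),
      A.FinalOutput N x (f n x)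

/-- Computability with infinite memory: `Y` and the `Z_d` are allowed to be
countable (the message alphabet `M` stays finite). -/
def ComputableWithInfiniteMemory {X Y : Type} (f : ∀ n, (Fin n → X) → Y) : Prop :=
  ∃ (M : Type) (Z : ℕ → Type) (A : Algorithm X Y M Z),
    Countable Y ∧ Finite M ∧ (∀ d, Countable (Z d)) ∧
    ∀ n, 0 < n → ∀ (N : PortNetwork n) (x : Fin n → X),
      A.FinalOutput N x (f n x)

/-!
For every level `v ≤ K` the nodes determine the sign of `∑ i, x i - n * v` with tokens. At level
`v` a node with value `a` holds `(a - v)⁺` mobile `+` tokens facing `(v - a)⁺` static `-` tokens,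
and `(v - a)⁺` mobile `-` tokens facing `(a - v)⁺` static `+` tokens. A mobile token reaching a
static token it faces annihilates with it, and every annihilation gives birth to a balance token,
which dies at any node still holding a static token of its level. Tokens are routed by rotors, and
every node remembers at each level the kind of the last token it received.

The global state ranges over a finite set, so the execution is eventually periodic. Along the
period nothing is ever destroyed (the number of static tokens only decreases, so it is constant
there), and a rotor that has sent a token turns once around its ports within a period, so every
kind of token still alive reaches every node. Hence no static token faced by an alive mobile kind
survives, which leaves alive the `+` tokens alone if `∑ x > n v`, the `-` tokens alone if
`∑ x < n v`, and balance tokens alone if `∑ x = n v` (those born when the last static tokens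
vanished). The memories of all levels thus converge to the signs, and these locate the average.
-/

open Finset Filter

theorem exists_periodic_of_finite {α : Type*} [Finite α] (F : α → α) (u : ℕ → α)
    (hu : ∀ t, u (t + 1) = F (u t)) : ∃ T p, 0 < p ∧ ∀ t, T ≤ t → u (t + p) = u t := by
  obtain ⟨a, b, hab, heq⟩ := Finite.exists_ne_map_eq_of_infinite u
  wlog hlt : a < b generalizing a b
  · exact this b a hab.symm heq.symm (by omega)
  refine ⟨a, b - a, by omega, fun t ht => ?_⟩
  induction t, ht using Nat.le_induction with
  | base => rw [Nat.add_sub_cancel' hlt.le, heq]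
  | succ t _ ih => rw [show t + 1 + (b - a) = t + (b - a) + 1 by omega, hu, hu, ih]

theorem succ_eq_of_antitone_of_periodic {f : ℕ → ℕ} {T p : ℕ} (hp : 0 < p)
    (hanti : ∀ t, T ≤ t → f (t + 1) ≤ f t) (hper : ∀ t, T ≤ t → f (t + p) = f t)
    {t : ℕ} (ht : T ≤ t) : f (t + 1) = f t := by
  have hle : ∀ k, f (t + 1 + k) ≤ f (t + 1) := by
    intro k
    induction k with
    | zero => rfl
    | succ k ih => exact (hanti (t + 1 + k) (by omega)).trans ih
  have := hle (p - 1)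
  rw [show t + 1 + (p - 1) = t + p by omega, hper t ht] at this
  exact le_antisymm (hanti t ht) this

theorem eq_of_succ_eq {α : Type*} {f : ℕ → α} {T : ℕ} (h : ∀ t, T ≤ t → f (t + 1) = f t)
    {t : ℕ} (ht : T ≤ t) : f t = f T := by
  induction t, ht using Nat.le_induction with
  | base => rfl
  | succ t ht ih => rw [h t ht, ih]

theorem card_filter_sub_mod_lt {d r s : ℕ} (hr : r < d) (hs : s ≤ d) :
    #{p : Fin d | (d + p - r) % d < s} = s := by
  have : NeZero d := ⟨by omega⟩
  let e : Fin d ≃ Fin d := Equiv.subRight ⟨r, hr⟩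
  have he : ∀ p : Fin d, ((e p : Fin d) : ℕ) = (d + p - r) % d := fun p => by
    simp only [e, Equiv.subRight_apply, Fin.val_sub]
    congr 1
    omega
  calc #{p : Fin d | (d + p - r) % d < s} = #{q : Fin d | (q : ℕ) < s} := by
        rw [← card_map e.toEmbedding]
        congr 1
        ext q
        simp only [mem_map_equiv, mem_filter, mem_univ, true_and, ← he, Equiv.apply_symm_apply]
    _ = s := by rw [Fin.card_filter_val_lt, min_eq_right hs]

theorem exists_le_lt_succ {C : ℕ → ℕ} {P m : ℕ} (h0 : C 0 ≤ m) (hP : m < C P) :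
    ∃ j < P, C j ≤ m ∧ m < C (j + 1) := by
  induction P with
  | zero => omega
  | succ P ih =>
    by_cases h : m < C P
    · obtain ⟨j, hj, hj'⟩ := ih h
      exact ⟨j, by omega, hj'⟩
    · exact ⟨P, by omega, by omega, hP⟩

/-- A rotor on `d` ports which advances by the number `a j` of tokens it sends at step `j`, and is
back at its starting position after `P` steps during which it sent a token, has sent a token
through every port `q`. -/
theorem exists_window_of_rotor_returns {d P : ℕ} {r a : ℕ → ℕ} (hr0 : r 0 < d)
    (hr : ∀ j, r (j + 1) = (r j + a j) % d) (hret : r P = r 0)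
    (hsent : 0 < ∑ j ∈ range P, a j) {q : ℕ} (hq : q < d) :
    ∃ j < P, (d + q - r j) % d < a j := by
  have hrC : ∀ k, r k = (r 0 + ∑ j ∈ range k, a j) % d := by
    intro k
    induction k with
    | zero => simp [Nat.mod_eq_of_lt hr0]
    | succ k ih => rw [hr, ih, sum_range_succ, Nat.mod_add_mod, add_assoc]
  have hdvd : d ∣ ∑ j ∈ range P, a j := by
    have h : r 0 + ∑ j ∈ range P, a j ≡ r 0 + 0 [MOD d] := by
      rw [add_zero]
      exact (hrC P).symm.trans (hret.trans (Nat.mod_eq_of_lt hr0).symm)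
    exact (Nat.modEq_zero_iff_dvd).1 (Nat.ModEq.add_left_cancel' _ h)
  set m := (d + q - r 0) % d
  have hmd : m < d := Nat.mod_lt _ (by omega)
  obtain ⟨j, hjP, hjm, hmj⟩ := exists_le_lt_succ (C := fun k => ∑ j ∈ range k, a j)
    (Nat.zero_le m) (hmd.trans_le (Nat.le_of_dvd hsent hdvd))
  simp only [sum_range_succ] at hmj
  refine ⟨j, hjP, ?_⟩
  have hwin : (d + q - r j) % d = m - ∑ i ∈ range j, a i := by
    refine Eq.trans ?_ (Nat.mod_eq_of_lt (show m - ∑ i ∈ range j, a i < d by omega))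
    refine Nat.ModEq.add_right_cancel' (r j) ?_
    have hrj : r j < d := by rw [hrC]; exact Nat.mod_lt _ (by omega)
    calc d + q - r j + r j = d + q := by omega
      _ ≡ d + q - r 0 + r 0 [MOD d] := by rw [Nat.sub_add_cancel (by omega)]
      _ ≡ m + r 0 [MOD d] := Nat.ModEq.add_right _ (Nat.mod_modEq _ _).symm
      _ = m - ∑ i ∈ range j, a i + (r 0 + ∑ i ∈ range j, a i) := by omega
      _ ≡ m - ∑ i ∈ range j, a i + r j [MOD d] :=
        Nat.ModEq.add_left _ (by rw [hrC j]; exact (Nat.mod_modEq _ _).symm)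
  rw [hwin]
  omega

namespace PortNetwork

variable {n : ℕ} (N : PortNetwork n)

def nbr (i : Fin n) (p : Fin (N.deg i)) : Fin n := ((N.port i).symm p).1

def revPort (i : Fin n) (p : Fin (N.deg i)) : Fin (N.deg (N.nbr i p)) :=
  N.port (N.nbr i p) ⟨i, N.symm _ _ ((N.port i).symm p).2⟩

lemma nbr_port (i j : Fin n) (h : N.adj i j) : N.nbr i (N.port i ⟨j, h⟩) = j := by
  simp [nbr]

def flip (e : Σ i, Fin (N.deg i)) : Σ i, Fin (N.deg i) := ⟨N.nbr e.1 e.2, N.revPort e.1 e.2⟩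

lemma flip_flip (e : Σ i, Fin (N.deg i)) : N.flip (N.flip e) = e := by
  obtain ⟨i, p⟩ := e
  let G (k : Fin n) (u : {l // N.adj k l}) : Σ i, Fin (N.deg i) :=
    ⟨u.1, N.port u.1 ⟨k, N.symm _ _ u.2⟩⟩
  have hback : (N.port (N.nbr i p)).symm (N.revPort i p) = ⟨i, N.symm _ _ ((N.port i).symm p).2⟩ :=
    Equiv.symm_apply_apply _ _
  change G (N.nbr i p) ((N.port (N.nbr i p)).symm (N.revPort i p)) = ⟨i, p⟩
  rw [hback]
  exact congrArg (Sigma.mk i) ((N.port i).apply_symm_apply p)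

lemma revPort_revPort {α : Type*} (m : ∀ i, Fin (N.deg i) → α) (i : Fin n) (p : Fin (N.deg i)) :
    m (N.nbr (N.nbr i p) (N.revPort i p)) (N.revPort (N.nbr i p) (N.revPort i p)) = m i p :=
  congrArg (fun e : Σ i, Fin (N.deg i) => m e.1 e.2) (N.flip_flip ⟨i, p⟩)

lemma sum_card_filter_revPort (b : ∀ i, Fin (N.deg i) → Bool) :
    ∑ i, #{p | b (N.nbr i p) (N.revPort i p)} = ∑ i, #{p | b i p} := by
  have h := Equiv.sum_comp ⟨N.flip, N.flip, N.flip_flip, N.flip_flip⟩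
    (fun e => if b e.1 e.2 then 1 else 0)
  simp only [Fintype.sum_sigma, Equiv.coe_fn_mk, flip] at h
  simp only [card_filter]
  convert h using 4
  congr

lemma forall_of_adj_closed {P : Fin n → Prop} (h : ∀ i j, N.adj i j → P i → P j) {i : Fin n}
    (hi : P i) (j : Fin n) : P j := by
  induction N.connected i j with
  | refl => exact hi
  | tail _ hbc ih => exact h _ _ hbc ih

lemma deg_pos (hn : 1 < n) (i : Fin n) : 0 < N.deg i := by
  obtain ⟨j, hji⟩ := Fintype.exists_ne_of_one_lt_card (by rwa [Fintype.card_fin]) i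
  obtain rfl | ⟨k, hik, -⟩ := (N.connected i j).cases_head
  · exact absurd rfl hji
  · exact Fintype.card_pos_iff.2 ⟨⟨k, hik⟩⟩

lemma deg_eq_zero (hn : n ≤ 1) (i : Fin n) : N.deg i = 0 :=
  Fintype.card_eq_zero_iff.2
    ⟨fun ⟨j, hj⟩ => N.loopless i (by rwa [Fin.ext (by omega : j.1 = i.1)] at hj)⟩

end PortNetwork

namespace IntervalAverage

variable (K : ℕ)

/-- The tokens of level `v` of kind `some true` are the mobile `+` tokens, those of kind
`some false` the mobile `-` tokens, and those of kind `none` the balance tokens. -/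
abbrev TokenClass := Fin (K + 1) × Option Bool

abbrev Message := TokenClass K → Bool

/-- `Sum.inl v` stands for the interval `{v}` and `Sum.inr v` for the interval `(v, v + 1)`. -/
abbrev Output := Fin (K + 1) ⊕ Fin K

/-- `static v s` counts the static tokens of level `v` faced by the mobile tokens of kind `some s`,
and `last v` is the kind of the last token of level `v` received. -/
structure NodeState (d : ℕ) where
  rotor : TokenClass K → Fin (max d 1)
  queue : TokenClass K → Fin (K + 1)
  static : Fin (K + 1) → Bool → Fin (K + 1)
  last : Fin (K + 1) → Option Bool
  started : Bool

instance (d : ℕ) : Finite (NodeState K d) :=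
  Finite.of_injective (fun z : NodeState K d => (z.rotor, z.queue, z.static, z.last, z.started))
    (by rintro ⟨⟩ ⟨⟩ h; simp_all)

variable {K}

def excess (s : Bool) (a v : ℕ) : ℕ := if s then a - v else v - a

lemma excess_le (s : Bool) (a v : Fin (K + 1)) : excess s a v ≤ K := by
  have := a.isLt
  have := v.isLt
  cases s <;> simp only [excess, Bool.false_eq_true, ↓reduceIte] <;> omega

def expectedKind (n S v : ℕ) : Option Bool := if n * v = S then none else some (decide (n * v < S))

def initState (d : ℕ) (a : Fin (K + 1)) : NodeState K d where
  rotor _ := ⟨0, by omega⟩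
  queue
    | (v, some s) => ⟨excess s a v, Nat.lt_succ_of_le (excess_le s a v)⟩
    | (_, none) => 0
  static v s := ⟨excess (!s) a v, Nat.lt_succ_of_le (excess_le (!s) a v)⟩
  last v := expectedKind 1 a v
  started := true

def arrivals {d : ℕ} (ms : Fin d → Message K) (c : TokenClass K) : ℕ := #{p | ms p c}

lemma arrivals_le {d : ℕ} (ms : Fin d → Message K) (c : TokenClass K) : arrivals ms c ≤ d :=
  (card_filter_le _ _).trans_eq (card_fin d)

namespace NodeState

section Step

variable {d : ℕ} (z : NodeState K d) (ms : Fin d → Message K)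

def cancelled (v : Fin (K + 1)) (s : Bool) : ℕ := min (arrivals ms (v, some s)) (z.static v s)

def staticLeft (v : Fin (K + 1)) (s : Bool) : ℕ := z.static v s - z.cancelled ms v s

def pool : TokenClass K → ℕ
  | (v, some s) => z.queue (v, some s) + arrivals ms (v, some s) - z.cancelled ms v s
  | (v, none) =>
    if z.staticLeft ms v true + z.staticLeft ms v false = 0 then
      z.queue (v, none) + arrivals ms (v, none) + z.cancelled ms v true + z.cancelled ms v false
    else 0

def sent (c : TokenClass K) : ℕ := min (z.pool ms c) d

def newLast (v : Fin (K + 1)) : Option Bool :=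
  if 0 < arrivals ms (v, some true) then some true
  else if 0 < arrivals ms (v, some false) then some false
  else if 0 < arrivals ms (v, none) then none
  else z.last v

/-- The reductions modulo `K + 1` never take effect, see `queue_next` and `static_next`. -/
def next : NodeState K d where
  rotor c := ⟨(z.rotor c + z.sent ms c) % max d 1, Nat.mod_lt _ (by omega)⟩
  queue c := Fin.ofNat _ (z.pool ms c - z.sent ms c)
  static v s := Fin.ofNat _ (z.staticLeft ms v s)
  last := z.newLast ms
  started := true

/-- The tokens of class `c` leave through the `z.sent ms c` ports starting at the rotor. -/
def outbox (p : Fin d) : Message K := fun c => decide ((d + p - z.rotor c) % d < z.sent ms c)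

lemma cancelled_le_arrivals (v : Fin (K + 1)) (s : Bool) :
    z.cancelled ms v s ≤ arrivals ms (v, some s) := min_le_left _ _

lemma cancelled_le_static (v : Fin (K + 1)) (s : Bool) : z.cancelled ms v s ≤ z.static v s :=
  min_le_right _ _

lemma sent_le_pool (c : TokenClass K) : z.sent ms c ≤ z.pool ms c := min_le_left _ _

lemma sent_le (c : TokenClass K) : z.sent ms c ≤ d := min_le_right _ _

lemma pool_some_add_cancelled (v : Fin (K + 1)) (s : Bool) :
    z.pool ms (v, some s) + z.cancelled ms v s = z.queue (v, some s) + arrivals ms (v, some s) := by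
  have := z.cancelled_le_arrivals ms v s
  simp only [pool]
  omega

lemma pool_none_le (v : Fin (K + 1)) :
    z.pool ms (v, none) ≤
      z.queue (v, none) + arrivals ms (v, none) + z.cancelled ms v true + z.cancelled ms v false := by
  simp only [pool]
  split_ifs <;> omega

lemma pool_none_of_staticLeft_eq_zero (v : Fin (K + 1))
    (h : z.staticLeft ms v true + z.staticLeft ms v false = 0) :
    z.pool ms (v, none) =
      z.queue (v, none) + arrivals ms (v, none) + z.cancelled ms v true + z.cancelled ms v false :=
  if_pos h

lemma pool_none_eq_zero {v : Fin (K + 1)} {s : Bool} (h : 0 < z.staticLeft ms v s) :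
    z.pool ms (v, none) = 0 :=
  if_neg (by cases s <;> omega)

lemma pool_none_sub_sent_le (v : Fin (K + 1)) :
    z.pool ms (v, none) - z.sent ms (v, none) ≤
      z.queue (v, none) + z.cancelled ms v true + z.cancelled ms v false := by
  have := z.pool_none_le ms v
  have := arrivals_le ms (v, none)
  simp only [sent]
  omega

def BalanceBounded : Prop := ∀ v, (z.queue (v, none) : ℕ) + z.static v true + z.static v false ≤ K

lemma static_next (v : Fin (K + 1)) (s : Bool) :
    ((z.next ms).static v s : ℕ) = z.staticLeft ms v s := by
  have := (z.static v s).isLt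
  simp only [next, Fin.val_ofNat, staticLeft]
  exact Nat.mod_eq_of_lt (by omega)

lemma queue_next {z : NodeState K d} (hz : z.BalanceBounded) (c : TokenClass K) :
    ((z.next ms).queue c : ℕ) = z.pool ms c - z.sent ms c := by
  simp only [next, Fin.val_ofNat]
  refine Nat.mod_eq_of_lt (Nat.lt_succ_of_le ?_)
  obtain ⟨v, _ | s⟩ := c
  · have := hz v
    have := z.pool_none_sub_sent_le ms v
    have := z.cancelled_le_static ms v true
    have := z.cancelled_le_static ms v false
    omega
  · have := z.pool_some_add_cancelled ms v s
    have := arrivals_le ms (v, some s)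
    have := (z.queue (v, some s)).isLt
    simp only [sent]
    omega

lemma BalanceBounded.next {z : NodeState K d} (hz : z.BalanceBounded) :
    (z.next ms).BalanceBounded := fun v => by
  rw [queue_next ms hz, static_next, static_next]
  have := hz v
  have := z.pool_none_sub_sent_le ms v
  have := z.cancelled_le_static ms v true
  have := z.cancelled_le_static ms v false
  simp only [staticLeft]
  omega

lemma card_outbox (c : TokenClass K) : #{p | z.outbox ms p c} = z.sent ms c := by
  rcases Nat.eq_zero_or_pos d with rfl | hd
  · simp [sent]
  · have := (z.rotor c).isLt
    simpa only [outbox, decide_eq_true_eq] using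
      card_filter_sub_mod_lt (by omega : (z.rotor c : ℕ) < d) (z.sent_le ms c)

lemma newLast_eq (v : Fin (K + 1)) (k : Option Bool) (h : ∀ k' ≠ k, arrivals ms (v, k') = 0) :
    z.newLast ms v = if 0 < arrivals ms (v, k) then k else z.last v := by
  have h1 := h (some true)
  have h2 := h (some false)
  have h3 := h none
  rcases k with _ | _ | _ <;> simp_all [newLast]

end Step

lemma balanceBounded_initState (d : ℕ) (a : Fin (K + 1)) :
    (initState (K := K) d a).BalanceBounded := fun v => by
  have := a.isLt
  have := v.isLt
  simp only [initState, excess, Bool.not_true, Bool.not_false, Fin.coe_ofNat_eq_mod, Nat.zero_mod,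
    Bool.false_eq_true, if_true, if_false, zero_add]
  omega

end NodeState

open NodeState

/-- The levels whose last token is a `+` token are those strictly below the average. -/
def decode (last : Fin (K + 1) → Option Bool) : Output K :=
  let m := #{v | last v = some true}
  if ∃ v, last v = none then .inl (Fin.ofNat _ m)
  else if h : m - 1 < K then .inr ⟨m - 1, h⟩ else .inl 0

variable (K) in
/-- The initial memory `z0` cannot depend on the input, so a node loads its initial state in
the first round. -/
def alg : Algorithm (Fin (K + 1)) (Output K) (Message K) (NodeState K) where
  trans d a z _ ms :=
    let z := if z.started then z else initState d a
    (z.next ms, decode (z.next ms).last, z.outbox ms)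
  z0 _ := ⟨fun _ => ⟨0, by omega⟩, fun _ => 0, fun _ _ => 0, fun _ => none, false⟩
  y0 := .inl 0
  m0 _ := false

section Run

variable {n : ℕ} (N : PortNetwork n) (x : Fin n → Fin (K + 1))

/-- The messages received in round `t`, which runs from time `t` to time `t + 1`. -/
def inbox (t : ℕ) (i : Fin n) (p : Fin (N.deg i)) : Message K :=
  ((alg K).run N x t (N.nbr i p)).2.2 (N.revPort i p)

def node (t : ℕ) (i : Fin n) : NodeState K (N.deg i) :=
  let z := ((alg K).run N x t i).1
  if z.started then z else initState (N.deg i) (x i)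

lemma run_succ (t : ℕ) (i : Fin n) :
    (alg K).run N x (t + 1) i =
      ((node N x t i).next (inbox N x t i), decode ((node N x t i).next (inbox N x t i)).last,
        (node N x t i).outbox (inbox N x t i)) := rfl

lemma node_zero (i : Fin n) : node N x 0 i = initState (N.deg i) (x i) := rfl

lemma node_succ (t : ℕ) (i : Fin n) :
    node N x (t + 1) i = (node N x t i).next (inbox N x t i) := by
  simp only [node, run_succ, next, if_true]

lemma output_succ (t : ℕ) (i : Fin n) :
    ((alg K).run N x (t + 1) i).2.1 = decode (node N x (t + 1) i).last := by
  rw [node_succ, run_succ]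

lemma arrivals_inbox_zero (i : Fin n) (c : TokenClass K) : arrivals (inbox N x 0 i) c = 0 := by
  simp [arrivals, inbox, Algorithm.run, alg]

lemma inbox_succ_revPort (t : ℕ) (i : Fin n) (p : Fin (N.deg i)) :
    inbox N x (t + 1) (N.nbr i p) (N.revPort i p) = (node N x t i).outbox (inbox N x t i) p :=
  N.revPort_revPort (fun j q => ((alg K).run N x (t + 1) j).2.2 q) i p

lemma balanceBounded_node (t : ℕ) (i : Fin n) : (node N x t i).BalanceBounded := by
  induction t with
  | zero => exact balanceBounded_initState _ _
  | succ t ih => rw [node_succ]; exact ih.next _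

def inTransit (t : ℕ) (c : TokenClass K) : ℕ := ∑ i, arrivals (inbox N x t i) c

def alive (t : ℕ) (c : TokenClass K) : ℕ := ∑ i, ((node N x t i).queue c : ℕ) + inTransit N x t c

def staticTotal (t : ℕ) (v : Fin (K + 1)) (s : Bool) : ℕ := ∑ i, ((node N x t i).static v s : ℕ)

def cancelTotal (t : ℕ) (v : Fin (K + 1)) (s : Bool) : ℕ :=
  ∑ i, (node N x t i).cancelled (inbox N x t i) v s

def excessTotal (v : Fin (K + 1)) (s : Bool) : ℕ := ∑ i, excess s (x i) v

lemma inTransit_succ (t : ℕ) (c : TokenClass K) :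
    inTransit N x (t + 1) c = ∑ i, (node N x t i).sent (inbox N x t i) c := by
  rw [inTransit]
  refine (N.sum_card_filter_revPort (fun j q => ((alg K).run N x (t + 1) j).2.2 q c)).trans ?_
  refine sum_congr rfl fun i _ => ?_
  rw [← card_outbox, run_succ]

lemma arrivals_le_alive (t : ℕ) (i : Fin n) (c : TokenClass K) :
    arrivals (inbox N x t i) c ≤ alive N x t c :=
  (single_le_sum (f := fun j => arrivals (inbox N x t j) c) (fun _ _ => Nat.zero_le _)
    (mem_univ i)).trans (Nat.le_add_left _ _)

lemma alive_succ (t : ℕ) (c : TokenClass K) :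
    alive N x (t + 1) c = ∑ i, (node N x t i).pool (inbox N x t i) c := by
  simp only [alive, inTransit_succ, node_succ, queue_next _ (balanceBounded_node N x t _),
    ← sum_add_distrib]
  exact sum_congr rfl fun i _ => Nat.sub_add_cancel (sent_le_pool _ _ _)

lemma alive_some_succ_add (t : ℕ) (v : Fin (K + 1)) (s : Bool) :
    alive N x (t + 1) (v, some s) + cancelTotal N x t v s = alive N x t (v, some s) := by
  rw [alive_succ]
  simp only [cancelTotal, ← sum_add_distrib, pool_some_add_cancelled, alive, inTransit]

lemma alive_none_succ_le (t : ℕ) (v : Fin (K + 1)) :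
    alive N x (t + 1) (v, none) ≤
      alive N x t (v, none) + cancelTotal N x t v true + cancelTotal N x t v false := by
  rw [alive_succ]
  simp only [cancelTotal, alive, inTransit, ← sum_add_distrib]
  exact sum_le_sum fun i _ => pool_none_le _ _ v

lemma staticTotal_succ_add (t : ℕ) (v : Fin (K + 1)) (s : Bool) :
    staticTotal N x (t + 1) v s + cancelTotal N x t v s = staticTotal N x t v s := by
  simp only [staticTotal, cancelTotal, node_succ, static_next, staticLeft, ← sum_add_distrib]
  exact sum_congr rfl fun i _ => Nat.sub_add_cancel (cancelled_le_static _ _ _ _)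

lemma alive_none_succ_of_staticTotal_eq_zero (t : ℕ) (v : Fin (K + 1))
    (h : staticTotal N x (t + 1) v true + staticTotal N x (t + 1) v false = 0) :
    alive N x (t + 1) (v, none) =
      alive N x t (v, none) + cancelTotal N x t v true + cancelTotal N x t v false := by
  rw [alive_succ]
  simp only [cancelTotal, alive, inTransit, ← sum_add_distrib]
  refine sum_congr rfl fun i _ => pool_none_of_staticLeft_eq_zero _ _ v ?_
  simp only [staticTotal, node_succ, static_next, ← sum_add_distrib, sum_eq_zero_iff] at h
  exact h i (mem_univ i)

lemma alive_zero_some (v : Fin (K + 1)) (s : Bool) :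
    alive N x 0 (v, some s) = excessTotal x v s := by
  simp [alive, inTransit, arrivals_inbox_zero, node_zero, initState, excessTotal]

lemma alive_zero_none (v : Fin (K + 1)) : alive N x 0 (v, none) = 0 := by
  simp [alive, inTransit, arrivals_inbox_zero, node_zero, initState]

lemma staticTotal_zero (v : Fin (K + 1)) (s : Bool) :
    staticTotal N x 0 v s = excessTotal x v (!s) := by
  simp [staticTotal, node_zero, initState, excessTotal]

lemma alive_add_excessTotal (t : ℕ) (v : Fin (K + 1)) (s : Bool) :
    alive N x t (v, some s) + excessTotal x v (!s) = excessTotal x v s + staticTotal N x t v s := by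
  induction t with
  | zero => rw [alive_zero_some, staticTotal_zero, add_comm]
  | succ t ih =>
    have := alive_some_succ_add N x t v s
    have := staticTotal_succ_add N x t v s
    omega

/-- As soon as the static tokens of level `v` are all gone, the balance tokens born at the last
cancellations can no longer be killed. -/
lemma staticTotal_pos_or_alive_none_pos (v : Fin (K + 1))
    (h : 0 < staticTotal N x 0 v true + staticTotal N x 0 v false) (t : ℕ) :
    0 < staticTotal N x t v true + staticTotal N x t v false ∨ 0 < alive N x t (v, none) := by
  induction t with
  | zero => exact Or.inl h
  | succ t ih =>
    by_cases h0 : staticTotal N x (t + 1) v true + staticTotal N x (t + 1) v false = 0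
    · have := alive_none_succ_of_staticTotal_eq_zero N x t v h0
      have := staticTotal_succ_add N x t v true
      have := staticTotal_succ_add N x t v false
      omega
    · omega

lemma alive_eq_zero_of_staticTotal_zero_eq_zero {v : Fin (K + 1)}
    (h : staticTotal N x 0 v true + staticTotal N x 0 v false = 0) (t : ℕ) (k : Option Bool) :
    alive N x t (v, k) = 0 := by
  have hstatic : ∀ t s, staticTotal N x t v s = 0 := fun t s => by
    induction t with
    | zero => cases s <;> omega
    | succ t ih => have := staticTotal_succ_add N x t v s; omega
  have hcancel : ∀ t s, cancelTotal N x t v s = 0 := fun t s => by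
    have := staticTotal_succ_add N x t v s
    rw [hstatic, hstatic] at this
    omega
  rcases k with _ | s
  · induction t with
    | zero => exact alive_zero_none N x v
    | succ t ih =>
      have := alive_none_succ_le N x t v
      rw [ih, hcancel, hcancel] at this
      omega
  · have := alive_add_excessTotal N x t v s
    have := staticTotal_zero N x v (!s)
    rw [Bool.not_not] at this
    rw [hstatic, hstatic] at *
    omega

lemma last_eq_of_arrivals_eq_zero {i : Fin n} {v : Fin (K + 1)}
    (h : ∀ t k, arrivals (inbox N x t i) (v, k) = 0) (t : ℕ) :
    (node N x t i).last v = expectedKind 1 (x i) v := by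
  induction t with
  | zero => rfl
  | succ t ih => simp only [node_succ, next, newLast, h, lt_self_iff_false, if_false, ih]

def PeriodicFrom (T p : ℕ) : Prop :=
  0 < p ∧ ∀ t, T ≤ t → (alg K).run N x (t + p) = (alg K).run N x t

lemma exists_periodicFrom : ∃ T p, PeriodicFrom N x T p :=
  exists_periodic_of_finite
    (fun R i => (alg K).trans _ (x i) (R i).1 (R i).2.1 fun k => (R (N.nbr i k)).2.2 (N.revPort i k))
    ((alg K).run N x) (fun _ => rfl)

end Run

namespace PeriodicFrom

variable {n : ℕ} {N : PortNetwork n} {x : Fin n → Fin (K + 1)} {T p : ℕ}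

lemma node_add_period (hP : PeriodicFrom N x T p) {t : ℕ} (ht : T ≤ t) (i : Fin n) :
    node N x (t + p) i = node N x t i := by
  rw [node, node, hP.2 t ht]

lemma inbox_add_period (hP : PeriodicFrom N x T p) {t : ℕ} (ht : T ≤ t) (i : Fin n) :
    inbox N x (t + p) i = inbox N x t i := by
  funext q
  rw [inbox, inbox, hP.2 t ht]

lemma cancelTotal_eq_zero (hP : PeriodicFrom N x T p) {t : ℕ} (ht : T ≤ t) (v : Fin (K + 1))
    (s : Bool) : cancelTotal N x t v s = 0 := by
  have hconst := succ_eq_of_antitone_of_periodic (f := fun t => staticTotal N x t v s) hP.1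
    (fun t _ => (staticTotal_succ_add N x t v s).symm ▸ Nat.le_add_right _ _)
    (fun t ht => by simp only [staticTotal, hP.node_add_period ht]) ht
  have := staticTotal_succ_add N x t v s
  omega

lemma cancelled_eq_zero (hP : PeriodicFrom N x T p) {t : ℕ} (ht : T ≤ t) (i : Fin n)
    (v : Fin (K + 1)) (s : Bool) : (node N x t i).cancelled (inbox N x t i) v s = 0 :=
  sum_eq_zero_iff.1 (hP.cancelTotal_eq_zero ht v s) i (mem_univ i)

lemma pool_eq (hP : PeriodicFrom N x T p) {t : ℕ} (ht : T ≤ t) (i : Fin n) (c : TokenClass K) :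
    (node N x t i).pool (inbox N x t i) c = (node N x t i).queue c + arrivals (inbox N x t i) c := by
  obtain ⟨v, _ | s⟩ := c
  · have hle : ∀ j, (node N x t j).pool (inbox N x t j) (v, none) ≤
        (node N x t j).queue (v, none) + arrivals (inbox N x t j) (v, none) := fun j => by
      simpa only [hP.cancelled_eq_zero ht, add_zero] using
        pool_none_le (node N x t j) (inbox N x t j) v
    have hsum := succ_eq_of_antitone_of_periodic (f := fun t => alive N x t (v, none)) hP.1
      (fun t ht => by
        simpa only [hP.cancelTotal_eq_zero ht, add_zero] using alive_none_succ_le N x t v)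
      (fun t ht => by simp only [alive, inTransit, hP.node_add_period ht, hP.inbox_add_period ht])
      ht
    rw [alive_succ, alive, inTransit, ← sum_add_distrib] at hsum
    exact (sum_eq_sum_iff_of_le fun j _ => hle j).1 hsum i (mem_univ i)
  · simpa only [hP.cancelled_eq_zero ht, add_zero] using
      pool_some_add_cancelled (node N x t i) (inbox N x t i) v s

lemma alive_eq (hP : PeriodicFrom N x T p) {t : ℕ} (ht : T ≤ t) (c : TokenClass K) :
    alive N x t c = alive N x T c :=
  eq_of_succ_eq (f := fun t => alive N x t c) (fun t ht => by
    rw [alive_succ, alive, inTransit, ← sum_add_distrib]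
    exact sum_congr rfl fun i _ => hP.pool_eq ht i c) ht

lemma static_eq (hP : PeriodicFrom N x T p) {t : ℕ} (ht : T ≤ t) (i : Fin n) (v : Fin (K + 1))
    (s : Bool) : ((node N x t i).static v s : ℕ) = (node N x T i).static v s :=
  eq_of_succ_eq (f := fun t => ((node N x t i).static v s : ℕ)) (fun t ht => by
    simp only [node_succ, static_next, staticLeft, hP.cancelled_eq_zero ht, Nat.sub_zero]) ht

/-- Over one period the rotor of class `c` at `i` turns back to its position, so as soon as it has
sent a token it has swept all the ports of `i`. -/
lemma exists_arrivals_pos_nbr (hP : PeriodicFrom N x T p) {t₀ : ℕ} (ht₀ : T ≤ t₀) {i : Fin n}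
    {c : TokenClass K} (h : 0 < arrivals (inbox N x t₀ i) c) (q : Fin (N.deg i)) :
    ∃ t, T ≤ t ∧ 0 < arrivals (inbox N x t (N.nbr i q)) c := by
  have hmax : max (N.deg i) 1 = N.deg i := max_eq_left (h.trans_le (arrivals_le _ _))
  have hsent : 0 < (node N x t₀ i).sent (inbox N x t₀ i) c := by
    rw [sent, hP.pool_eq ht₀]
    exact lt_min (by omega) (h.trans_le (arrivals_le _ _))
  obtain ⟨j, -, hj⟩ := exists_window_of_rotor_returns (d := N.deg i) (P := p) (q := q)
    (r := fun j => (node N x (t₀ + j) i).rotor c)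
    (a := fun j => (node N x (t₀ + j) i).sent (inbox N x (t₀ + j) i) c)
    (by simpa [hmax] using ((node N x t₀ i).rotor c).isLt)
    (fun j => by simp only [← add_assoc, node_succ, next, hmax])
    (by simp only [hP.node_add_period ht₀, add_zero])
    (hsent.trans_le (single_le_sum (f := fun j => (node N x (t₀ + j) i).sent
      (inbox N x (t₀ + j) i) c) (fun _ _ => Nat.zero_le _) (mem_range.2 hP.1)))
    q.isLt
  refine ⟨t₀ + j + 1, by omega, card_pos.2 ⟨N.revPort i q, ?_⟩⟩
  simpa [inbox_succ_revPort, outbox] using hj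

lemma exists_node_arrivals_pos (hP : PeriodicFrom N x T p) (hdeg : ∀ i, 0 < N.deg i)
    {c : TokenClass K} (h : 0 < alive N x T c) :
    ∃ t, T ≤ t ∧ ∃ i, 0 < arrivals (inbox N x t i) c := by
  rw [← hP.alive_eq T.le_succ, alive_succ] at h
  obtain ⟨i, -, hi⟩ := sum_pos_iff.1 h
  have : 0 < inTransit N x (T + 1) c := by
    rw [inTransit_succ]
    exact sum_pos_iff.2 ⟨i, mem_univ i, lt_min hi (hdeg i)⟩
  obtain ⟨j, -, hj⟩ := sum_pos_iff.1 this
  exact ⟨T + 1, T.le_succ, j, hj⟩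

lemma exists_arrivals_pos (hP : PeriodicFrom N x T p) (hdeg : ∀ i, 0 < N.deg i)
    {c : TokenClass K} (h : 0 < alive N x T c) (i : Fin n) :
    ∃ t, T ≤ t ∧ 0 < arrivals (inbox N x t i) c := by
  obtain ⟨t₀, ht₀, i₀, hi₀⟩ := hP.exists_node_arrivals_pos hdeg h
  refine N.forall_of_adj_closed
    (P := fun j => ∃ t, T ≤ t ∧ 0 < arrivals (inbox N x t j) c) ?_ ⟨t₀, ht₀, hi₀⟩ i
  rintro j k hjk ⟨t, ht, hj⟩
  have := hP.exists_arrivals_pos_nbr ht hj (N.port j ⟨k, hjk⟩)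
  rwa [N.nbr_port] at this

lemma static_eq_zero_of_alive_some (hP : PeriodicFrom N x T p) (hdeg : ∀ i, 0 < N.deg i)
    {v : Fin (K + 1)} {s : Bool} (h : 0 < alive N x T (v, some s)) (i : Fin n) :
    ((node N x T i).static v s : ℕ) = 0 := by
  obtain ⟨t, ht, harr⟩ := hP.exists_arrivals_pos hdeg h i
  have := hP.cancelled_eq_zero ht i v s
  rw [cancelled, hP.static_eq ht] at this
  omega

lemma static_eq_zero_of_alive_none (hP : PeriodicFrom N x T p) (hdeg : ∀ i, 0 < N.deg i)
    {v : Fin (K + 1)} (h : 0 < alive N x T (v, none)) (i : Fin n) (s : Bool) :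
    ((node N x T i).static v s : ℕ) = 0 := by
  obtain ⟨t, ht, harr⟩ := hP.exists_arrivals_pos hdeg h i
  by_contra hs
  have hleft : 0 < (node N x t i).staticLeft (inbox N x t i) v s := by
    rw [staticLeft, hP.cancelled_eq_zero ht, hP.static_eq ht]
    omega
  have := hP.pool_eq ht i (v, none)
  rw [pool_none_eq_zero _ _ hleft] at this
  omega

lemma eventually_last_eq (hP : PeriodicFrom N x T p) (hdeg : ∀ i, 0 < N.deg i)
    {v : Fin (K + 1)} {k : Option Bool} (hk : 0 < alive N x T (v, k))
    (hother : ∀ k' ≠ k, alive N x T (v, k') = 0) (i : Fin n) :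
    ∀ᶠ t in atTop, (node N x t i).last v = k := by
  obtain ⟨t₀, ht₀, harr⟩ := hP.exists_arrivals_pos hdeg hk i
  have hstep : ∀ t, T ≤ t → (node N x (t + 1) i).last v =
      if 0 < arrivals (inbox N x t i) (v, k) then k else (node N x t i).last v := fun t ht => by
    rw [node_succ]
    refine newLast_eq _ _ v k fun k' hk' => Nat.eq_zero_of_le_zero ?_
    rw [← hother k' hk', ← hP.alive_eq ht]
    exact arrivals_le_alive N x t i _
  refine eventually_atTop.2 ⟨t₀ + 1, fun t ht => ?_⟩
  induction t, ht using Nat.le_induction with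
  | base => rw [hstep t₀ ht₀, if_pos harr]
  | succ t ht ih => rw [hstep t (by omega), ih, ite_self]

end PeriodicFrom

section Levels

variable {n : ℕ} {N : PortNetwork n} {x : Fin n → Fin (K + 1)}

lemma eventually_last_eq_some (hdeg : ∀ i, 0 < N.deg i) {v : Fin (K + 1)} {s : Bool}
    (h : excessTotal x v (!s) < excessTotal x v s) (i : Fin n) :
    ∀ᶠ t in atTop, (node N x t i).last v = some s := by
  obtain ⟨T, p, hP⟩ := exists_periodicFrom N x
  have halive : 0 < alive N x T (v, some s) := by
    have := alive_add_excessTotal N x T v s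
    omega
  have hstatic : 0 < staticTotal N x T v (!s) := by
    have := alive_add_excessTotal N x T v (!s)
    rw [Bool.not_not] at this
    omega
  obtain ⟨w, -, hw⟩ := sum_pos_iff.1 hstatic
  refine hP.eventually_last_eq hdeg halive ?_ i
  rintro (_ | s') hs' <;> by_contra h0
  · exact hw.ne' (hP.static_eq_zero_of_alive_none hdeg (Nat.pos_of_ne_zero h0) w (!s))
  · obtain rfl : s' = !s := by cases s <;> cases s' <;> simp_all
    exact hw.ne' (hP.static_eq_zero_of_alive_some hdeg (Nat.pos_of_ne_zero h0) w)

lemma eventually_last_eq_none (hdeg : ∀ i, 0 < N.deg i) {v : Fin (K + 1)}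
    (h : excessTotal x v true = excessTotal x v false) (i : Fin n) :
    ∀ᶠ t in atTop, (node N x t i).last v = none := by
  by_cases h0 : staticTotal N x 0 v true + staticTotal N x 0 v false = 0
  · have hx : (x i : ℕ) = v := by
      have h1 := staticTotal_zero N x v true
      have h2 := staticTotal_zero N x v false
      rw [Bool.not_true] at h1
      rw [Bool.not_false] at h2
      have e1 := sum_eq_zero_iff.1 (show excessTotal x v false = 0 by omega) i (mem_univ i)
      have e2 := sum_eq_zero_iff.1 (show excessTotal x v true = 0 by omega) i (mem_univ i)
      simp only [excess, if_true, Bool.false_eq_true, if_false] at e1 e2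
      omega
    refine Eventually.of_forall fun t => ?_
    rw [last_eq_of_arrivals_eq_zero N x (fun t k => Nat.eq_zero_of_le_zero
      ((arrivals_le_alive N x t i _).trans_eq
        (alive_eq_zero_of_staticTotal_zero_eq_zero N x h0 t k))) t]
    simp [expectedKind, hx]
  · obtain ⟨T, p, hP⟩ := exists_periodicFrom N x
    have hcons : ∀ s, alive N x T (v, some s) = staticTotal N x T v s := fun s => by
      have := alive_add_excessTotal N x T v s
      cases s <;> simp only [Bool.not_true, Bool.not_false] at this <;> omega
    have hstatic : ∀ s, staticTotal N x T v s = 0 := fun s => by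
      by_contra hs
      have := hP.static_eq_zero_of_alive_some hdeg (s := s) (by rw [hcons]; omega)
      exact hs (sum_eq_zero fun i _ => this i)
    have halive := (staticTotal_pos_or_alive_none_pos N x v (Nat.pos_of_ne_zero h0) T).resolve_left
      (by simp [hstatic])
    refine hP.eventually_last_eq hdeg halive ?_ i
    rintro (_ | s) hs
    · exact absurd rfl hs
    · rw [hcons, hstatic]

lemma excessTotal_true_add (v : Fin (K + 1)) :
    excessTotal x v true + n * v = ∑ j, (x j : ℕ) + excessTotal x v false := by
  have hv : ∑ _j : Fin n, (v : ℕ) = n * v := by simp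
  rw [← hv, excessTotal, excessTotal, ← sum_add_distrib, ← sum_add_distrib]
  exact sum_congr rfl fun j _ => by simp only [excess, if_true, Bool.false_eq_true, if_false]; omega

lemma expectedKind_eq_some {v : Fin (K + 1)} (s : Bool)
    (h : excessTotal x v (!s) < excessTotal x v s) :
    expectedKind n (∑ j, (x j : ℕ)) v = some s := by
  have := excessTotal_true_add (x := x) v
  unfold expectedKind
  cases s <;> simp only [Bool.not_true, Bool.not_false] at h
  · rw [if_neg (by omega), decide_eq_false (by omega)]
  · rw [if_neg (by omega), decide_eq_true (by omega)]

lemma expectedKind_eq_none {v : Fin (K + 1)} (h : excessTotal x v true = excessTotal x v false) :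
    expectedKind n (∑ j, (x j : ℕ)) v = none := by
  have := excessTotal_true_add (x := x) v
  rw [expectedKind, if_pos (by omega)]

variable (N x) in
lemma eventually_last_eq_expectedKind (hn : 0 < n) (i : Fin n) (v : Fin (K + 1)) :
    ∀ᶠ t in atTop, (node N x t i).last v = expectedKind n (∑ j, (x j : ℕ)) v := by
  obtain rfl | hn1 : n = 1 ∨ 1 < n := by omega
  · refine Eventually.of_forall fun t => ?_
    rw [last_eq_of_arrivals_eq_zero N x (fun t k => ?_), Fin.sum_univ_one, Subsingleton.elim i 0]
    exact Nat.eq_zero_of_le_zero ((arrivals_le _ _).trans_eq (N.deg_eq_zero le_rfl i))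
  · have hdeg := N.deg_pos hn1
    rcases lt_trichotomy (excessTotal x v false) (excessTotal x v true) with h | h | h
    · rw [expectedKind_eq_some true h]
      exact eventually_last_eq_some hdeg h i
    · rw [expectedKind_eq_none h.symm]
      exact eventually_last_eq_none hdeg h.symm i
    · rw [expectedKind_eq_some false h]
      exact eventually_last_eq_some hdeg h i

end Levels

lemma card_expectedKind_eq_some_true {n S m : ℕ} (hm : m ≤ K + 1) (h : ∀ v, n * v < S ↔ v < m) :
    #{v : Fin (K + 1) | expectedKind n S v = some true} = m := by
  have hiff : ∀ v : Fin (K + 1), expectedKind n S v = some true ↔ (v : ℕ) < m := fun v => by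
    rw [← h]
    unfold expectedKind
    split_ifs <;> simp_all
  simp only [hiff, Fin.card_filter_val_lt, min_eq_right hm]

lemma decode_expectedKind {n S : ℕ} (hn : 0 < n) {y : Output K}
    (hy : Sum.elim (fun v : Fin (K + 1) => (S : ℚ) / n = (v : ℕ))
      (fun v : Fin K => ((v : ℕ) : ℚ) < (S : ℚ) / n ∧ (S : ℚ) / n < (v : ℕ) + 1) y) :
    decode (fun v : Fin (K + 1) => expectedKind n S v) = y := by
  have hnq : (0 : ℚ) < n := by exact_mod_cast hn
  rcases y with w | w
  · have hS : S = n * w := by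
      have := (div_eq_iff hnq.ne').1 hy
      rw [mul_comm] at this
      exact_mod_cast this
    have hcard := card_expectedKind_eq_some_true (K := K) w.isLt.le (n := n) (S := S) fun v => by
      rw [hS]
      exact Nat.mul_lt_mul_left hn
    have hnone : ∃ v : Fin (K + 1), expectedKind n S v = none := ⟨w, by simp [expectedKind, hS]⟩
    simp only [decode, hcard, hnone, if_true, Fin.ofNat_val_eq_self]
  · obtain ⟨h1, h2⟩ := hy
    have hlo : n * w < S := by
      have := (lt_div_iff₀ hnq).1 h1
      rw [mul_comm] at this
      exact_mod_cast this
    have hhi : S < n * (w + 1) := by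
      have := (div_lt_iff₀ hnq).1 h2
      rw [mul_comm] at this
      exact_mod_cast this
    have hcard := card_expectedKind_eq_some_true (K := K) (m := w + 1) (by omega) (n := n)
      (S := S) fun v => by
        constructor
        · intro hv
          by_contra hc
          have := Nat.mul_le_mul_left n (show w + 1 ≤ v by omega)
          omega
        · intro hv
          have := Nat.mul_le_mul_left n (show v ≤ w by omega)
          omega
    have hnone : ¬∃ v : Fin (K + 1), expectedKind n S v = none := by
      rintro ⟨v, hv⟩
      simp only [expectedKind, ite_eq_left_iff, reduceCtorEq, imp_false, not_not] at hv
      rcases Nat.lt_or_ge (v : ℕ) (w + 1) with hv' | hv'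
      · have := Nat.mul_le_mul_left n (show (v : ℕ) ≤ w by omega)
        omega
      · have := Nat.mul_le_mul_left n hv'
        omega
    simp only [decode, hcard, hnone, if_false, Nat.add_sub_cancel, w.isLt, dite_true]

end IntervalAverage

open IntervalAverage

/-- with `X = {0,…,K}` and `Y` the collection of intervals
`{0}, (0,1), {1}, …, (K-1,K), {K}` (indexed here by `Fin (K+1) ⊕ Fin K`, where
`Sum.inl v` stands for the singleton `{v}` and `Sum.inr v` for the open
interval `(v, v+1)`), the family mapping `x` to the element of `Y` containing
the average `(1/n) Σ_i x_i` is computable. -/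
theorem interval_average_computable (K : ℕ)
    (f : ∀ n, (Fin n → Fin (K + 1)) → (Fin (K + 1) ⊕ Fin K))
    (hf : ∀ n, 0 < n → ∀ x : Fin n → Fin (K + 1),
      Sum.elim
        (fun v : Fin (K + 1) => (∑ i, ((x i : ℕ) : ℚ)) / (n : ℚ) = ((v : ℕ) : ℚ))
        (fun v : Fin K => ((v : ℕ) : ℚ) < (∑ i, ((x i : ℕ) : ℚ)) / (n : ℚ) ∧
          (∑ i, ((x i : ℕ) : ℚ)) / (n : ℚ) < ((v : ℕ) : ℚ) + 1)
        (f n x)) :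
    ComputableFamily f := by
  refine ⟨Message K, NodeState K, alg K, inferInstance, inferInstance, fun _ => inferInstance,
    fun n hn N x => ?_⟩
  have hlast : ∀ᶠ t in atTop,
      ∀ i, (node N x t i).last = fun v : Fin (K + 1) => expectedKind n (∑ j, (x j : ℕ)) v :=
    eventually_all.2 fun i =>
      (eventually_all.2 (eventually_last_eq_expectedKind N x hn i)).mono fun _ => funext
  obtain ⟨T, hT⟩ := eventually_atTop.1 hlast
  have hy := decode_expectedKind hn (S := ∑ j, (x j : ℕ)) (y := f n x)
    (by simpa only [Nat.cast_sum] using hf n hn x)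
  refine ⟨T + 1, fun t ht i => ?_⟩
  obtain ⟨t, rfl⟩ := Nat.exists_eq_add_of_lt ht
  rw [output_succ, hT _ (by omega), hy]
end

section
/- Let X = {1,…,K} and Y = D ∩ ℚ^K (a countable set). The family of functions (f_n : X^n → Y)_{n≥1} defined by f_n(x) = (p_1(x), …, p_K(x)) — the vector of frequencies of the K possible initial values — is computable with infinite memory. -/
/-!
Nodes compute their views in the sense of Yamashita and Kameda: the depth-`k` view of a node records
its input and, for every port, the port number at the other end and the depth-`(k - 1)` view of the
neighbour. The partition of the nodes by equal depth-`k` views refines as `k` grows, so some level is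
stable. On a stable level the recorded back ports make "follow port `p`" an injection from the class
of a node into the class of its neighbour, so by connectivity all classes have the same size, and the
input frequencies among the classes are those among the nodes. The depth-`2h` view of a node contains
the depth-`h` views of all nodes within distance `h`; once `h` is at least the stable level and the
radius of the graph, that is one view per class.

Messages are single bits or silence: each node streams to every neighbour, in unary, the port number
and then its own views of increasing depth. Depth-`m` views of all neighbours yield the own
depth-`(m + 1)` view, so the known depth grows without bound, and each node outputs `f` of the inputs
of the distinct views it reads off its deepest view.
-/

open Finset Filter

def unaryCode (m : ℕ) : List Bool := List.replicate m true ++ [false]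

/-- `c` counts the `true`s read since the last `false`; an unfinished trailing code is dropped. -/
def parseUnaryFrom : List Bool → ℕ → List ℕ
  | [], _ => []
  | true :: l, c => parseUnaryFrom l (c + 1)
  | false :: l, c => c :: parseUnaryFrom l 0

def parseUnary (l : List Bool) : List ℕ := parseUnaryFrom l 0

lemma parseUnaryFrom_replicate_true_append (k : ℕ) (l : List Bool) (c : ℕ) :
    parseUnaryFrom (List.replicate k true ++ l) c = parseUnaryFrom l (c + k) := by
  induction k generalizing c with
  | zero => rfl
  | succ k ih =>
    rw [List.replicate_succ, List.cons_append, parseUnaryFrom, ih]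
    ac_rfl

lemma parseUnary_unaryCode_append (m : ℕ) (l : List Bool) :
    parseUnary (unaryCode m ++ l) = m :: parseUnary l := by
  simp [parseUnary, unaryCode, parseUnaryFrom_replicate_true_append, parseUnaryFrom]

lemma parseUnary_flatten_map_unaryCode (L : List ℕ) :
    parseUnary (L.map unaryCode).flatten = L := by
  induction L with
  | nil => rfl
  | cons m L ih => rw [List.map_cons, List.flatten_cons, parseUnary_unaryCode_append, ih]

lemma parseUnaryFrom_prefix_append (l r : List Bool) (c : ℕ) :
    parseUnaryFrom l c <+: parseUnaryFrom (l ++ r) c := by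
  induction l generalizing c with
  | nil => exact List.nil_prefix
  | cons b l ih =>
    cases b
    · exact List.cons_prefix_cons.mpr ⟨rfl, ih 0⟩
    · exact ih _

lemma List.IsPrefix.parseUnary {l₁ l₂ : List Bool} (h : l₁ <+: l₂) :
    parseUnary l₁ <+: parseUnary l₂ := by
  obtain ⟨r, rfl⟩ := h
  exact parseUnaryFrom_prefix_append l₁ r 0

def encodeSeq (s : ℕ → ℕ) (L : ℕ) : List Bool := ((List.range L).map (unaryCode ∘ s)).flatten

lemma encodeSeq_prefix (s : ℕ → ℕ) {L L' : ℕ} (h : L ≤ L') :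
    encodeSeq s L <+: encodeSeq s L' := by
  obtain ⟨r, hr⟩ : List.range L <+: List.range L' := by
    simpa [List.take_range, min_eq_left h] using List.take_prefix L (List.range L')
  exact ⟨_, by rw [encodeSeq, encodeSeq, ← hr, List.map_append, List.flatten_append]⟩

lemma encodeSeq_congr {s s' : ℕ → ℕ} {L : ℕ} (h : ∀ r < L, s r = s' r) :
    encodeSeq s L = encodeSeq s' L := by
  unfold encodeSeq
  congr 1
  exact List.map_congr_left fun r hr => by simp [h r (List.mem_range.mp hr)]

lemma parseUnary_encodeSeq (s : ℕ → ℕ) (L : ℕ) :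
    parseUnary (encodeSeq s L) = (List.range L).map s := by
  rw [encodeSeq, ← List.map_map, parseUnary_flatten_map_unaryCode]

lemma exists_parseUnary_take_encodeSeq (s : ℕ → ℕ) (L k : ℕ) :
    ∃ a, parseUnary ((encodeSeq s L).take k) = (List.range a).map s := by
  have h := (List.take_prefix k (encodeSeq s L)).parseUnary
  rw [parseUnary_encodeSeq, List.prefix_iff_eq_take] at h
  exact ⟨_, by rw [h, ← List.map_take, List.take_range]⟩

lemma le_length_parseUnary_take_encodeSeq (s : ℕ → ℕ) {m L k : ℕ} (hm : m ≤ L)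
    (hk : (encodeSeq s m).length ≤ k) :
    m ≤ (parseUnary ((encodeSeq s L).take k)).length := by
  have h : encodeSeq s m <+: (encodeSeq s L).take k :=
    List.prefix_take_iff.mpr ⟨encodeSeq_prefix s hm, hk⟩
  simpa [parseUnary_encodeSeq] using h.parseUnary.length_le

lemma Finset.card_filter_comp_eq_card_filter_image_mul {ι β : Type*} [Fintype ι] [DecidableEq β]
    {g : ι → β} {s : ℕ} (hs : ∀ a, #{a' | g a' = g a} = s) (P : β → Prop) [DecidablePred P] :
    #{a | P (g a)} = #{b ∈ univ.image g | P b} * s := by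
  rw [card_eq_sum_card_fiberwise (f := g) (t := {b ∈ univ.image g | P b}) (fun a ha => by simp_all),
    ← smul_eq_mul, ← sum_const]
  refine sum_congr rfl fun b hb => ?_
  obtain ⟨⟨a, -, rfl⟩, hP⟩ : (∃ a ∈ univ, g a = b) ∧ P b := by simpa using hb
  rw [← hs a]
  congr 1
  ext a'
  simp +contextual [hP]

lemma Finset.card_filter_orderIsoOfFin {β : Type*} [LinearOrder β] (s : Finset β)
    (P : β → Prop) [DecidablePred P] : #{a | P (s.orderIsoOfFin rfl a)} = #{b ∈ s | P b} := by
  refine card_bij (fun a _ => s.orderIsoOfFin rfl a) (fun a ha => ?_)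
    (fun a _ a' _ h => (s.orderIsoOfFin rfl).injective (Subtype.ext h)) fun b hb => ?_
  · exact mem_filter.mpr ⟨coe_mem _, (mem_filter.mp ha).2⟩
  · obtain ⟨hbs, hP⟩ := mem_filter.mp hb
    refine ⟨(s.orderIsoOfFin rfl).symm ⟨b, hbs⟩, mem_filter.mpr ⟨mem_univ _, ?_⟩, by simp⟩
    simpa using hP

lemma eventually_le_counter {s F : ℕ → ℕ}
    (hs : ∀ t, s (t + 1) = if s t < F (t + 1) then s t + 1 else s t) {ℓ : ℕ}
    (hF : ∀ᶠ t in atTop, ℓ ≤ F t) : ∀ᶠ t in atTop, ℓ ≤ s t := by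
  obtain ⟨T, hT⟩ := eventually_atTop.mp hF
  have key : ∀ u, min ℓ u ≤ s (T + u) := by
    intro u
    induction u with
    | zero => simp
    | succ u ih =>
      rw [← Nat.add_assoc, hs]
      have := hT (T + u + 1) (by omega)
      split_ifs <;> omega
  refine eventually_atTop.mpr ⟨T + ℓ, fun t ht => ?_⟩
  have := key (t - T)
  rw [Nat.add_sub_cancel' (by omega)] at this
  omega

lemma Filter.eventually_atTop_of_eventually_succ {P : ℕ → Prop}
    (h : ∀ᶠ t in atTop, P (t + 1)) : ∀ᶠ t in atTop, P t := by
  rwa [← map_add_atTop_eq_nat 1, eventually_map]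

def viewCode (a b : ℕ) {d : ℕ} (nb : Fin d → ℕ × ℕ) : ℕ :=
  Nat.pair a (Nat.pair b (Encodable.encode (List.ofFn nb)))

lemma viewCode_eq_viewCode_iff {a a' b b' d d' : ℕ} {nb : Fin d → ℕ × ℕ}
    {nb' : Fin d' → ℕ × ℕ} :
    viewCode a b nb = viewCode a' b' nb' ↔
      a = a' ∧ b = b' ∧ ∃ hd : d = d', ∀ p, nb p = nb' (Fin.cast hd p) := by
  simp only [viewCode, Nat.pair_eq_pair, Encodable.encode_inj, List.ofFn_inj',
    Fin.sigma_eq_iff_eq_comp_cast, funext_iff, Function.comp_apply]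

def viewPrev (c : ℕ) : ℕ := c.unpair.2.unpair.1

def viewNbrs (c : ℕ) : List ℕ :=
  ((Encodable.decode (α := List (ℕ × ℕ)) c.unpair.2.unpair.2).getD []).map Prod.snd

def viewsWithin : ℕ → ℕ → Finset ℕ
  | 0, c => {c}
  | r + 1, c => insert (viewPrev^[r + 1] c) ((viewNbrs c).toFinset.biUnion (viewsWithin r))

namespace PortNetwork

variable {n : ℕ} (N : PortNetwork n)

lemma adj_nbr (i : Fin n) (p : Fin (N.deg i)) : N.adj i (N.nbr i p) := ((N.port i).symm p).2

def backPort (i : Fin n) (p : Fin (N.deg i)) : Fin (N.deg (N.nbr i p)) :=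
  N.port (N.nbr i p) ⟨i, N.symm _ _ (N.adj_nbr i p)⟩

@[simp]
lemma nbr_backPort (i : Fin n) (p : Fin (N.deg i)) : N.nbr (N.nbr i p) (N.backPort i p) = i :=
  congrArg Subtype.val ((N.port (N.nbr i p)).symm_apply_apply _)

lemma exists_nbr_eq {i j : Fin n} (h : N.adj i j) : ∃ p, N.nbr i p = j :=
  ⟨N.port i ⟨j, h⟩, by simp [nbr]⟩

lemma nbr_congr {i i' : Fin n} (h : i = i') {p : Fin (N.deg i)} {p' : Fin (N.deg i')}
    (hp : (p : ℕ) = p') : N.nbr i p = N.nbr i' p' := by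
  subst h
  rw [Fin.ext hp]

lemma eq_of_deg_eq_zero {i : Fin n} (h : N.deg i = 0) (j : Fin n) : j = i := by
  rcases (N.connected i j).cases_head with hij | ⟨c, hc, -⟩
  · exact hij.symm
  · exact absurd h (Fintype.card_pos_iff.mpr ⟨⟨c, hc⟩⟩).ne'

variable {α : Type*} [Encodable α] (x : Fin n → α)

def view : ℕ → Fin n → ℕ
  | 0, i => Nat.pair (Encodable.encode (x i)) 0
  | k + 1, i => viewCode (Encodable.encode (x i)) (view k i)
      fun p => ((N.backPort i p : ℕ), view k (N.nbr i p))

variable {N x}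

lemma unpair_view_fst (k : ℕ) (i : Fin n) :
    (N.view x k i).unpair.1 = Encodable.encode (x i) := by
  cases k <;> simp [view, viewCode]

lemma view_succ_eq_view_succ_iff {k : ℕ} {i j : Fin n} :
    N.view x (k + 1) i = N.view x (k + 1) j ↔
      N.view x k i = N.view x k j ∧ ∃ hd : N.deg i = N.deg j, ∀ p,
        (N.backPort i p : ℕ) = N.backPort j (Fin.cast hd p) ∧
          N.view x k (N.nbr i p) = N.view x k (N.nbr j (Fin.cast hd p)) := by
  rw [view, view, viewCode_eq_viewCode_iff]
  simp only [Prod.ext_iff]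
  constructor
  · exact fun h => h.2
  · intro h
    refine ⟨?_, h⟩
    rw [← unpair_view_fst k i, ← unpair_view_fst k j, h.1]

lemma view_eq_view_of_le {k m : ℕ} (hkm : k ≤ m) {i j : Fin n}
    (h : N.view x m i = N.view x m j) : N.view x k i = N.view x k j := by
  induction m, hkm using Nat.le_induction with
  | base => exact h
  | succ m _ ih => exact ih (view_succ_eq_view_succ_iff.mp h).1

variable (N x) in
def IsStableLevel (k : ℕ) : Prop :=
  ∀ i j, N.view x k i = N.view x k j → N.view x (k + 1) i = N.view x (k + 1) j

lemma IsStableLevel.succ {k : ℕ} (hk : N.IsStableLevel x k) : N.IsStableLevel x (k + 1) := by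
  intro i j h
  obtain ⟨-, hd, hp⟩ := view_succ_eq_view_succ_iff.mp h
  exact view_succ_eq_view_succ_iff.mpr
    ⟨h, hd, fun p => ⟨(hp p).1, hk _ _ (hp p).2⟩⟩

lemma IsStableLevel.mono {k m : ℕ} (hk : N.IsStableLevel x k) (hkm : k ≤ m) :
    N.IsStableLevel x m := by
  induction m, hkm using Nat.le_induction with
  | base => exact hk
  | succ m _ ih => exact ih.succ

variable (N x) in
lemma exists_isStableLevel : ∃ k, N.IsStableLevel x k := by
  obtain ⟨k₁, k₂, hne, heq⟩ := Finite.exists_ne_map_eq_of_infinite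
    fun k (i j : Fin n) => N.view x k i = N.view x k j
  wlog hlt : k₁ < k₂ generalizing k₁ k₂
  · exact this k₂ k₁ hne.symm heq.symm (by omega)
  refine ⟨k₁, fun i j h => view_eq_view_of_le hlt ?_⟩
  rwa [← congrFun (congrFun heq i) j]

variable (N x) in
def viewClass (k : ℕ) (i : Fin n) : Finset (Fin n) := {j | N.view x k j = N.view x k i}

lemma mem_viewClass {k : ℕ} {i j : Fin n} :
    j ∈ N.viewClass x k i ↔ N.view x k j = N.view x k i := by
  simp [viewClass]

/-- On a stable level the views of `j` and `i` record the same back port behind port `p`, so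
following `p` is injective on the class of `i`. -/
lemma card_viewClass_le_nbr {k : ℕ} (hk : N.IsStableLevel x k) (i : Fin n) (p : Fin (N.deg i)) :
    #(N.viewClass x k i) ≤ #(N.viewClass x k (N.nbr i p)) := by
  let φ : Fin n → Fin n := fun j => if hd : N.deg i = N.deg j then N.nbr j (Fin.cast hd p) else j
  have hφ : ∀ j ∈ N.viewClass x k i, ∃ hd : N.deg i = N.deg j,
      φ j = N.nbr j (Fin.cast hd p) ∧ (N.backPort j (Fin.cast hd p) : ℕ) = N.backPort i p ∧
        N.nbr j (Fin.cast hd p) ∈ N.viewClass x k (N.nbr i p) := by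
    intro j hj
    obtain ⟨-, hd, hp⟩ := view_succ_eq_view_succ_iff.mp (hk _ _ (mem_viewClass.mp hj)).symm
    exact ⟨hd, dif_pos hd, (hp p).1.symm, mem_viewClass.mpr (hp p).2.symm⟩
  refine Finset.card_le_card_of_injOn φ (fun j hj => ?_) (fun j hj j' hj' he => ?_)
  · obtain ⟨hd, he, -, hm⟩ := hφ j hj
    rwa [he]
  · obtain ⟨hd, hφj, hb, -⟩ := hφ j hj
    obtain ⟨hd', hφj', hb', -⟩ := hφ j' hj'
    rw [hφj, hφj'] at he
    calc j = N.nbr (N.nbr j (Fin.cast hd p)) (N.backPort j (Fin.cast hd p)) := by simp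
      _ = N.nbr (N.nbr j' (Fin.cast hd' p)) (N.backPort j' (Fin.cast hd' p)) :=
        N.nbr_congr he (hb.trans hb'.symm)
      _ = j' := by simp

lemma card_viewClass_eq {k : ℕ} (hk : N.IsStableLevel x k) (i j : Fin n) :
    #(N.viewClass x k i) = #(N.viewClass x k j) := by
  induction N.connected i j with
  | refl => rfl
  | tail _ hadj ih =>
    obtain ⟨p, rfl⟩ := N.exists_nbr_eq hadj
    refine ih.trans (le_antisymm (card_viewClass_le_nbr hk _ p) ?_)
    simpa using card_viewClass_le_nbr hk _ (N.backPort _ p)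

/-- Since all classes of a stable level have the same size, counting classes counts nodes. -/
lemma card_filter_image_view_mul_eq [DecidableEq α] {k : ℕ} (hk : N.IsStableLevel x k)
    {lbl : ℕ → α} (hlbl : ∀ j, lbl (N.view x k j) = x j) (v : α) :
    #{c ∈ univ.image (N.view x k) | lbl c = v} * n =
      #{j | x j = v} * #(univ.image (N.view x k)) := by
  rcases isEmpty_or_nonempty (Fin n) with hn | ⟨⟨i₀⟩⟩
  · simp [univ_eq_empty]
  have hfib : ∀ j, #{j' | N.view x k j' = N.view x k j} = #(N.viewClass x k i₀) :=
    fun j => card_viewClass_eq hk j i₀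
  have hv := card_filter_comp_eq_card_filter_image_mul hfib fun c => lbl c = v
  have hn := card_filter_comp_eq_card_filter_image_mul hfib fun _ => True
  simp only [hlbl, filter_true, card_univ, Fintype.card_fin] at hv hn
  rw [hv, congrArg (_ * ·) hn]
  ring

variable (N) in
def ball : ℕ → Fin n → Finset (Fin n)
  | 0, i => {i}
  | r + 1, i => insert i (univ.biUnion fun p : Fin (N.deg i) => ball r (N.nbr i p))

lemma mem_ball_succ {r : ℕ} {i j : Fin n} :
    j ∈ N.ball (r + 1) i ↔ j = i ∨ ∃ p, j ∈ N.ball r (N.nbr i p) := by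
  simp [ball]

lemma self_mem_ball (r : ℕ) (i : Fin n) : i ∈ N.ball r i := by
  cases r
  · simp [ball]
  · exact mem_ball_succ.mpr (.inl rfl)

lemma ball_subset_ball_succ (r : ℕ) (i : Fin n) : N.ball r i ⊆ N.ball (r + 1) i := by
  induction r generalizing i with
  | zero => simp [ball]
  | succ r ih =>
    intro j hj
    rcases mem_ball_succ.mp hj with rfl | ⟨p, hp⟩
    · exact self_mem_ball _ _
    · exact mem_ball_succ.mpr (.inr ⟨p, ih _ hp⟩)

lemma ball_mono {r r' : ℕ} (h : r ≤ r') (i : Fin n) : N.ball r i ⊆ N.ball r' i := by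
  induction r', h using Nat.le_induction with
  | base => exact subset_rfl
  | succ r' _ ih => exact ih.trans (ball_subset_ball_succ r' i)

lemma mem_ball_succ_of_adj {r : ℕ} {i j j' : Fin n} (hj : j ∈ N.ball r i) (hadj : N.adj j j') :
    j' ∈ N.ball (r + 1) i := by
  induction r generalizing i with
  | zero =>
    obtain rfl : j = i := by simpa [ball] using hj
    obtain ⟨p, rfl⟩ := N.exists_nbr_eq hadj
    exact mem_ball_succ.mpr (.inr ⟨p, self_mem_ball 0 _⟩)
  | succ r ih =>
    rcases mem_ball_succ.mp hj with rfl | ⟨p, hp⟩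
    · obtain ⟨p, rfl⟩ := N.exists_nbr_eq hadj
      exact mem_ball_succ.mpr (.inr ⟨p, self_mem_ball _ _⟩)
    · exact mem_ball_succ.mpr (.inr ⟨p, ih hp⟩)

variable (N) in
lemma exists_ball_eq_univ : ∃ R, ∀ i, N.ball R i = univ := by
  have hreach : ∀ i j, ∃ r, j ∈ N.ball r i := fun i j => by
    induction N.connected i j with
    | refl => exact ⟨0, self_mem_ball 0 i⟩
    | tail _ hadj ih =>
      obtain ⟨r, hr⟩ := ih
      exact ⟨r + 1, mem_ball_succ_of_adj hr hadj⟩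
  choose r hr using hreach
  refine ⟨univ.sup fun ij : Fin n × Fin n => r ij.1 ij.2, fun i => eq_univ_of_forall fun j => ?_⟩
  exact ball_mono (le_sup (f := fun ij : Fin n × Fin n => r ij.1 ij.2) (mem_univ (i, j))) i
    (hr i j)

lemma viewPrev_iterate_view (t k : ℕ) (i : Fin n) :
    viewPrev^[t] (N.view x (k + t) i) = N.view x k i := by
  induction t with
  | zero => rfl
  | succ t ih =>
    rw [Function.iterate_succ_apply, ← Nat.add_assoc]
    simpa [view, viewCode, viewPrev] using ih

lemma viewNbrs_view_succ (k : ℕ) (i : Fin n) :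
    viewNbrs (N.view x (k + 1) i) = List.ofFn fun p => N.view x k (N.nbr i p) := by
  simp [viewNbrs, view, viewCode, List.map_ofFn, Function.comp_def]

lemma viewsWithin_view (r m : ℕ) (i : Fin n) :
    viewsWithin r (N.view x (m + r) i) = (N.ball r i).image (N.view x m) := by
  induction r generalizing i with
  | zero => simp [viewsWithin, ball]
  | succ r ih =>
    rw [viewsWithin, viewPrev_iterate_view, ← Nat.add_assoc, viewNbrs_view_succ, ball,
      image_insert]
    congr 1
    ext c
    simp only [mem_biUnion, List.mem_toFinset, List.mem_ofFn, mem_image, mem_univ, true_and]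
    grind

end PortNetwork

def FreqInvariant {X Y : Type} [DecidableEq X] (f : ∀ n, (Fin n → X) → Y) : Prop :=
  ∀ ⦃m n : ℕ⦄ (z : Fin m → X) (x : Fin n → X), 0 < m → 0 < n →
    (∀ v, #{a | z a = v} * n = #{j | x j = v} * m) → f m z = f n x

lemma freqInvariant_of_coe_apply_eq_div {X : Type} [DecidableEq X] {P : (X → ℚ) → Prop}
    {f : ∀ n, (Fin n → X) → Subtype P}
    (hf : ∀ n, 0 < n → ∀ (x : Fin n → X) (v : X), (f n x : X → ℚ) v = #{i | x i = v} / n) :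
    FreqInvariant f := by
  intro m n z x hm hn h
  ext v
  rw [hf m hm z v, hf n hn x v, div_eq_div_iff (by positivity) (by positivity)]
  exact_mod_cast h v

noncomputable section

section Algorithm

variable {X Y : Type} [Encodable X] (f : ∀ n, (Fin n → X) → Y)

/-- Per port: the number of bits sent so far and the bits received so far. -/
abbrev Memory (d : ℕ) : Type := (Fin d → ℕ) × (Fin d → List Bool)

/-- Entry `0` of `dat p` is the back port and entry `m + 1` the neighbour's depth-`m` view; the
depth-`(m + 1)` own view needs entry `m + 1` on every port. -/
def knownLevels {d : ℕ} (dat : Fin d → List ℕ) : ℕ := 1 + ⨅ p, ((dat p).length - 1)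

def ownView {d : ℕ} (a : ℕ) (dat : Fin d → List ℕ) : ℕ → ℕ
  | 0 => Nat.pair a 0
  | m + 1 => viewCode a (ownView a dat m) fun p => ((dat p).getD 0 0, (dat p).getD (m + 1) 0)

def portThen (q : ℕ) (v : ℕ → ℕ) : ℕ → ℕ
  | 0 => q
  | r + 1 => v r

def outStream {d : ℕ} (a : ℕ) (dat : Fin d → List ℕ) (p : Fin d) : List Bool :=
  encodeSeq (portThen p (ownView a dat)) (knownLevels dat + 1)

def decodeLabel (xv : X) (c : ℕ) : X := (Encodable.decode c.unpair.1).getD xv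

def outputOf (lbl : ℕ → X) (W : Finset ℕ) : Y := f #W fun a => lbl (W.orderIsoOfFin rfl a)

/-- With `2h + 1` known levels, the depth-`h` views within distance `h` are known. -/
def estimate {d : ℕ} (xv : X) (dat : Fin d → List ℕ) : Y :=
  let h := (knownLevels dat - 1) / 2
  outputOf f (decodeLabel xv) (viewsWithin h (ownView (Encodable.encode xv) dat (h + h)))

def freqAlgorithm : Algorithm X Y (Option Bool) Memory where
  trans _ xv z _ ms :=
    let recv p := z.2 p ++ (ms p).toList
    let dat p := parseUnary (recv p)
    let out p := outStream (Encodable.encode xv) dat p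
    ((fun p => if z.1 p < (out p).length then z.1 p + 1 else z.1 p, recv),
      estimate f xv dat, fun p => (out p)[z.1 p]?)
  z0 _ := (fun _ => 0, fun _ => [])
  y0 := f 0 Fin.elim0
  m0 := none

end Algorithm

lemma le_knownLevels {d m : ℕ} [NeZero d] {dat : Fin d → List ℕ}
    (h : ∀ p, m + 1 ≤ (dat p).length) : m + 1 ≤ knownLevels dat := by
  have : m ≤ ⨅ p, ((dat p).length - 1) := le_ciInf fun p => by have := h p; omega
  unfold knownLevels
  omega

lemma length_ge_of_lt_knownLevels {d m : ℕ} {dat : Fin d → List ℕ}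
    (h : m + 1 < knownLevels dat) (p : Fin d) : m + 2 ≤ (dat p).length := by
  have : ⨅ p, ((dat p).length - 1) ≤ (dat p).length - 1 := ciInf_le (OrderBot.bddBelow _) p
  unfold knownLevels at h
  omega

lemma knownLevels_mono {d : ℕ} {dat dat' : Fin d → List ℕ}
    (h : ∀ p, (dat p).length ≤ (dat' p).length) : knownLevels dat ≤ knownLevels dat' := by
  have := ciInf_mono (OrderBot.bddBelow _) fun p => Nat.sub_le_sub_right (h p) 1
  unfold knownLevels
  omega

namespace PortNetwork

variable {n : ℕ} {N : PortNetwork n} {X : Type} [Encodable X] {x : Fin n → X}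

lemma decodeLabel_view (xv : X) (k : ℕ) (i : Fin n) : decodeLabel xv (N.view x k i) = x i := by
  simp [decodeLabel, unpair_view_fst]

lemma outputOf_image_view {Y : Type} [DecidableEq X] {f : ∀ n, (Fin n → X) → Y}
    (hf : FreqInvariant f) (xv : X) {k : ℕ} (hk : N.IsStableLevel x k) (hn : 0 < n) :
    outputOf f (decodeLabel xv) (univ.image (N.view x k)) = f n x := by
  refine hf _ _ (card_pos.mpr ⟨_, mem_image_of_mem _ (mem_univ ⟨0, hn⟩)⟩) hn fun v => ?_
  rw [card_filter_orderIsoOfFin _ fun c => decodeLabel xv c = v]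
  exact card_filter_image_view_mul_eq hk (decodeLabel_view xv k) v

end PortNetwork

namespace freqAlgorithm

open PortNetwork

variable {X Y : Type} [Encodable X] (f : ∀ n, (Fin n → X) → Y) {n : ℕ} (N : PortNetwork n)
  (x : Fin n → X)

def sent (t : ℕ) (i : Fin n) : Fin (N.deg i) → ℕ := ((freqAlgorithm f).run N x t i).1.1

def received (t : ℕ) (i : Fin n) : Fin (N.deg i) → List Bool := ((freqAlgorithm f).run N x t i).1.2

def message (t : ℕ) (i : Fin n) : Fin (N.deg i) → Option Bool := ((freqAlgorithm f).run N x t i).2.2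

def data (t : ℕ) (i : Fin n) (p : Fin (N.deg i)) : List ℕ := parseUnary (received f N x t i p)

def levels (t : ℕ) (i : Fin n) : ℕ := knownLevels (data f N x t i)

def stream (t : ℕ) (i : Fin n) (p : Fin (N.deg i)) : List Bool :=
  outStream (Encodable.encode (x i)) (data f N x t i) p

lemma received_succ (t : ℕ) (i : Fin n) (p : Fin (N.deg i)) :
    received f N x (t + 1) i p =
      received f N x t i p ++ (message f N x t (N.nbr i p) (N.backPort i p)).toList := rfl

lemma message_succ (t : ℕ) (i : Fin n) (p : Fin (N.deg i)) :
    message f N x (t + 1) i p = (stream f N x (t + 1) i p)[sent f N x t i p]? := rfl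

lemma sent_succ (t : ℕ) (i : Fin n) (p : Fin (N.deg i)) :
    sent f N x (t + 1) i p = if sent f N x t i p < (stream f N x (t + 1) i p).length
      then sent f N x t i p + 1 else sent f N x t i p := rfl

lemma output_succ (t : ℕ) (i : Fin n) :
    ((freqAlgorithm f).run N x (t + 1) i).2.1 = estimate f (x i) (data f N x (t + 1) i) := rfl

def expected (i : Fin n) (p : Fin (N.deg i)) : ℕ → ℕ :=
  portThen (N.backPort i p) fun m => N.view x m (N.nbr i p)

def DataCorrect (i : Fin n) (dat : Fin (N.deg i) → List ℕ) : Prop :=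
  ∀ p, ∃ a, dat p = (List.range a).map (expected N x i p)

variable {N x}

lemma DataCorrect.getD_eq {i : Fin n} {dat : Fin (N.deg i) → List ℕ} (h : DataCorrect N x i dat)
    (p : Fin (N.deg i)) {r : ℕ} (hr : r < (dat p).length) :
    (dat p).getD r 0 = expected N x i p r := by
  obtain ⟨a, ha⟩ := h p
  rw [ha] at hr ⊢
  simp_all

lemma DataCorrect.ownView_eq_view {i : Fin n} {dat : Fin (N.deg i) → List ℕ}
    (h : DataCorrect N x i dat) {m : ℕ} (hm : m < knownLevels dat) :
    ownView (Encodable.encode (x i)) dat m = N.view x m i := by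
  induction m with
  | zero => rfl
  | succ m ih =>
    have hlen := length_ge_of_lt_knownLevels hm
    rw [ownView, view, ih (by omega)]
    congr 1
    funext p
    rw [h.getD_eq p (by have := hlen p; omega), h.getD_eq p (by have := hlen p; omega)]
    rfl

lemma DataCorrect.outStream_eq {i : Fin n} {dat : Fin (N.deg i) → List ℕ}
    (h : DataCorrect N x i dat) (p : Fin (N.deg i)) :
    outStream (Encodable.encode (x i)) dat p =
      encodeSeq (portThen p fun m => N.view x m i) (knownLevels dat + 1) := by
  refine encodeSeq_congr fun r hr => ?_
  cases r with
  | zero => rfl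
  | succ m => exact h.ownView_eq_view (by omega)

variable (N x)

lemma levels_le_levels_succ (t : ℕ) (i : Fin n) : levels f N x t i ≤ levels f N x (t + 1) i :=
  knownLevels_mono fun p => by
    rw [data, data, received_succ]
    exact (List.prefix_append _ _).parseUnary.length_le

structure Invariant (t : ℕ) : Prop where
  data_correct : ∀ i, DataCorrect N x i (data f N x t i)
  sent_le : ∀ i p, sent f N x t i p ≤ (stream f N x t i p).length
  received_succ_eq : ∀ i p, received f N x (t + 1) i p =
    (stream f N x t (N.nbr i p) (N.backPort i p)).take (sent f N x t (N.nbr i p) (N.backPort i p))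

variable {f N x}

lemma stream_eq_encodeSeq {t : ℕ} {i : Fin n} (h : DataCorrect N x i (data f N x t i))
    (p : Fin (N.deg i)) :
    stream f N x t i p = encodeSeq (portThen p fun m => N.view x m i) (levels f N x t i + 1) :=
  h.outStream_eq p

lemma Invariant.data_correct_succ {t : ℕ} (h : Invariant f N x t) (i : Fin n) :
    DataCorrect N x i (data f N x (t + 1) i) := fun p => by
  rw [data, h.received_succ_eq, stream_eq_encodeSeq (h.data_correct _)]
  exact exists_parseUnary_take_encodeSeq _ _ _

lemma Invariant.succ {t : ℕ} (h : Invariant f N x t) : Invariant f N x (t + 1) := by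
  have h' : ∀ i, DataCorrect N x i (data f N x (t + 1) i) := h.data_correct_succ
  have hpre : ∀ i p, stream f N x t i p <+: stream f N x (t + 1) i p := fun i p => by
    rw [stream_eq_encodeSeq (h.data_correct i), stream_eq_encodeSeq (h' i)]
    exact encodeSeq_prefix _ (by simpa using levels_le_levels_succ f N x t i)
  have htake : ∀ j q, (stream f N x t j q).take (sent f N x t j q) =
      (stream f N x (t + 1) j q).take (sent f N x t j q) := fun j q => by
    obtain ⟨r, hr⟩ := hpre j q
    rw [← hr, List.take_append_of_le_length (h.sent_le j q)]
  refine ⟨h', fun i p => ?_, fun i p => ?_⟩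
  · rw [sent_succ]
    split_ifs with hlt
    · exact hlt
    · exact (h.sent_le i p).trans (hpre i p).length_le
  · rw [received_succ, h.received_succ_eq, message_succ, sent_succ, htake]
    split_ifs with hlt
    · rw [List.take_add_one]
    · rw [List.getElem?_eq_none (not_lt.mp hlt), Option.toList_none, List.append_nil]

variable (f N x) in
theorem invariant (t : ℕ) : Invariant f N x t := by
  induction t with
  | zero => exact ⟨fun i p => ⟨0, rfl⟩, fun i p => Nat.zero_le _, fun i p => rfl⟩
  | succ t ih => exact ih.succ

variable (f x) in
theorem eventually_le_levels (hdeg : ∀ i, 0 < N.deg i) (m : ℕ) :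
    ∀ᶠ t in atTop, ∀ i, m ≤ levels f N x t i := by
  induction m with
  | zero => simp
  | succ m ih =>
    have hsent : ∀ᶠ t in atTop, ∀ j (q : Fin (N.deg j)),
        (encodeSeq (portThen q fun m => N.view x m j) (m + 1)).length ≤ sent f N x t j q := by
      simp only [eventually_all]
      intro j q
      refine eventually_le_counter (F := fun t => (stream f N x t j q).length)
        (sent_succ f N x · j q) ?_
      filter_upwards [ih] with t ht
      rw [stream_eq_encodeSeq ((invariant f N x t).data_correct j)]
      exact (encodeSeq_prefix _ (by simpa using ht j)).length_le
    refine eventually_atTop_of_eventually_succ ?_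
    filter_upwards [ih, hsent] with t hlev hsent i
    have : NeZero (N.deg i) := ⟨(hdeg i).ne'⟩
    refine le_knownLevels fun p => ?_
    rw [data, (invariant f N x t).received_succ_eq,
      stream_eq_encodeSeq ((invariant f N x t).data_correct _)]
    exact le_length_parseUnary_take_encodeSeq _ (by simpa using hlev _) (hsent _ _)

variable (f N x)

lemma output_succ_eq [DecidableEq X] (hf : FreqInvariant f) (hn : 0 < n) {t : ℕ} {i : Fin n}
    (hball : N.ball ((levels f N x (t + 1) i - 1) / 2) i = univ)
    (hst : N.IsStableLevel x ((levels f N x (t + 1) i - 1) / 2)) :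
    ((freqAlgorithm f).run N x (t + 1) i).2.1 = f n x := by
  have hlt : (levels f N x (t + 1) i - 1) / 2 + (levels f N x (t + 1) i - 1) / 2 <
      knownLevels (data f N x (t + 1) i) := by
    unfold levels knownLevels
    omega
  rw [output_succ, estimate, ← levels,
    ((invariant f N x (t + 1)).data_correct i).ownView_eq_view hlt, viewsWithin_view, hball,
    outputOf_image_view hf _ hst hn]

theorem eventually_ball_eq_univ_and_isStableLevel :
    ∀ᶠ t in atTop, ∀ i, N.ball ((levels f N x t i - 1) / 2) i = univ ∧
      N.IsStableLevel x ((levels f N x t i - 1) / 2) := by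
  by_cases hdeg : ∀ i, 0 < N.deg i
  · obtain ⟨k, hk⟩ := N.exists_isStableLevel x
    obtain ⟨R, hR⟩ := N.exists_ball_eq_univ
    filter_upwards [eventually_le_levels f x hdeg (2 * max k R + 1)] with t ht i
    have hh : max k R ≤ (levels f N x t i - 1) / 2 := by have := ht i; omega
    refine ⟨eq_univ_of_forall fun j => ?_, hk.mono (le_of_max_le_left hh)⟩
    exact ball_mono (le_of_max_le_right hh) i (hR i ▸ mem_univ j)
  · obtain ⟨i₀, hi₀⟩ := not_forall.mp hdeg
    have hall := N.eq_of_deg_eq_zero (Nat.eq_zero_of_not_pos hi₀)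
    refine Eventually.of_forall fun t i => ⟨eq_univ_of_forall fun j => ?_, fun j j' _ => ?_⟩
    · rw [hall j, ← hall i]
      exact self_mem_ball _ _
    · rw [hall j, hall j']

end freqAlgorithm

end

open freqAlgorithm in
theorem computableWithInfiniteMemory_of_freqInvariant {X Y : Type} [Encodable X] [DecidableEq X]
    [Countable Y] {f : ∀ n, (Fin n → X) → Y} (hf : FreqInvariant f) :
    ComputableWithInfiniteMemory f := by
  refine ⟨Option Bool, Memory, freqAlgorithm f, inferInstance, inferInstance, fun _ => inferInstance,
    fun n hn N x => eventually_atTop.mp (eventually_atTop_of_eventually_succ ?_)⟩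
  filter_upwards [(tendsto_add_atTop_nat 1).eventually
    (eventually_ball_eq_univ_and_isStableLevel f N x)] with t ht i
  exact output_succ_eq f N x hf hn (ht i).1 (ht i).2

/-- the vector of frequencies `(p_1(x),…,p_K(x))`, taking values
in the countable set `Y = D ∩ ℚ^K`, is computable with infinite memory. -/
theorem freq_vector_computableWithInfiniteMemory (K : ℕ)
    (f : ∀ n, (Fin n → Fin K) →
      {p : Fin K → ℚ // (∀ k, 0 ≤ p k ∧ p k ≤ 1) ∧ ∑ k, p k = 1})
    (hf : ∀ n, 0 < n → ∀ (x : Fin n → Fin K) (k : Fin K),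
      ((f n x : Fin K → ℚ) k) = ((Finset.univ.filter fun i => x i = k).card : ℚ) / n) :
    ComputableWithInfiniteMemory f :=
  computableWithInfiniteMemory_of_freqInvariant (freqInvariant_of_coe_apply_eq_div hf)
end

section
/- Let X = {0,1} and let k ≥ 2 be an integer. The family of functions (f_n : X^n → ℤ/kℤ)_{n≥1} defined by f_n(x_1, …, x_n) = (Σ_{i=1}^n x_i) mod k is not computable with infinite memory. -/
/-!
All inputs being equal, an algorithm cannot tell rings of different sizes apart. On a
consistently oriented ring (port `0` to the successor, port `1` to the predecessor) each node
receives on either port what its neighbour sent on the other one, so by induction on time all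
nodes are in the same state, namely that of a single node whose two ports are wired to each
other crosswise; this trajectory does not depend on the size of the ring. Hence the rings with
`3` and `4` nodes and all inputs `1` have the same final output, whereas `3 ≠ 4` in `ZMod k`.
-/

open Fin.CommRing

namespace Fin

variable {m : ℕ}

lemma two_ne_zero_of_add_three : (2 : Fin (m + 3)) ≠ 0 := by
  simp [Fin.ext_iff, Nat.mod_eq_of_lt (show 2 < m + 3 by omega)]

lemma add_one_ne_sub_one (i : Fin (m + 3)) : i + 1 ≠ i - 1 := fun h =>
  two_ne_zero_of_add_three (by linear_combination h)

lemma self_ne_add_one_add_one (i : Fin (m + 3)) : i ≠ i + 1 + 1 := fun h =>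
  two_ne_zero_of_add_three (by linear_combination -h)

end Fin

namespace PortNetwork

open Fin

variable {m : ℕ}

def cycleAdj (i j : Fin (m + 3)) : Bool := decide (j = i + 1 ∨ j = i - 1)

lemma cycleAdj_iff {i j : Fin (m + 3)} : cycleAdj i j ↔ j = i + 1 ∨ j = i - 1 := by
  simp [cycleAdj]

def cyclePort (i : Fin (m + 3)) : {j // cycleAdj i j} ≃ Fin 2 where
  toFun j := if j.1 = i + 1 then 0 else 1
  invFun p := if p = 0 then ⟨i + 1, by simp [cycleAdj]⟩ else ⟨i - 1, by simp [cycleAdj]⟩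
  left_inv := by
    rintro ⟨j, hj⟩
    rcases cycleAdj_iff.1 hj with rfl | rfl
    · simp
    · simp [(add_one_ne_sub_one i).symm]
  right_inv p := by
    fin_cases p
    · simp
    · simp [(add_one_ne_sub_one i).symm]

lemma cyclePort_symm (i : Fin (m + 3)) (j : {j // cycleAdj i j}) (h : cycleAdj j.1 i) :
    cyclePort j.1 ⟨i, h⟩ = Fin.rev (cyclePort i j) := by
  obtain ⟨j, hj⟩ := j
  rcases cycleAdj_iff.1 hj with rfl | rfl
  · simp [cyclePort, self_ne_add_one_add_one]
  · simp [cyclePort, (add_one_ne_sub_one i).symm]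

lemma card_cycleAdj (i : Fin (m + 3)) : Fintype.card {j // cycleAdj i j} = 2 :=
  (Fintype.card_congr (cyclePort i)).trans (Fintype.card_fin 2)

lemma reflTransGen_cycleAdj_add (i : Fin (m + 3)) (c : ℕ) :
    Relation.ReflTransGen (fun a b => cycleAdj a b) i (i + c) := by
  induction c with
  | zero => simp [Relation.ReflTransGen.refl]
  | succ c ih =>
    have hsucc : i + ((c + 1 : ℕ) : Fin (m + 3)) = i + c + 1 := by push_cast; ring
    exact hsucc ▸ ih.tail (by simp [cycleAdj])

def cycle (m : ℕ) : PortNetwork (m + 3) where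
  adj := cycleAdj
  symm i j h := by
    rcases cycleAdj_iff.1 h with rfl | rfl <;> simp [cycleAdj]
  loopless i h := by
    rcases cycleAdj_iff.1 h with h | h
    · exact one_ne_zero (by linear_combination -h : (1 : Fin (m + 3)) = 0)
    · exact one_ne_zero (by linear_combination h : (1 : Fin (m + 3)) = 0)
  connected i j := by
    simpa using reflTransGen_cycleAdj_add i (j - i).val
  port i := (cyclePort i).trans (finCongr (card_cycleAdj i).symm)

lemma cycle_deg (i : Fin (m + 3)) : (cycle m).deg i = 2 := card_cycleAdj i

lemma cycle_port_back (i : Fin (m + 3)) (k : Fin ((cycle m).deg i)) :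
    let j := ((cycle m).port i).symm k
    finCongr (cycle_deg j.1) ((cycle m).port j.1 ⟨i, (cycle m).symm _ _ j.2⟩) =
      Fin.rev (finCongr (cycle_deg i) k) :=
  (cyclePort_symm i _ _).trans (congrArg Fin.rev ((cyclePort i).apply_symm_apply _))

end PortNetwork

namespace Algorithm

open PortNetwork

variable {X Y M : Type} {Z : ℕ → Type}

def castState {d : ℕ} (h : d = 2) (s : Z 2 × Y × (Fin 2 → M)) : Z d × Y × (Fin d → M) :=
  (cast (congrArg Z h.symm) s.1, s.2.1, fun p => s.2.2 (finCongr h p))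

/-- A single node of a ring with constant input `x₀`: its successor sends it, on port `0`, what
it sends itself on port `1`, and its predecessor, on port `1`, what it sends on port `0`. -/
def cycleRun (A : Algorithm X Y M Z) (x₀ : X) : ℕ → Z 2 × Y × (Fin 2 → M)
  | 0 => (A.z0 2, A.y0, fun _ => A.m0)
  | t + 1 =>
    let s := cycleRun A x₀ t
    A.trans 2 x₀ s.1 s.2.1 (s.2.2 ∘ Fin.rev)

lemma castState_init (A : Algorithm X Y M Z) {d : ℕ} (h : d = 2) :
    ((A.z0 d, A.y0, fun _ => A.m0) : Z d × Y × (Fin d → M)) =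
      castState h (A.z0 2, A.y0, fun _ => A.m0) := by
  subst h; rfl

lemma trans_castState (A : Algorithm X Y M Z) (x₀ : X) {d : ℕ} (h : d = 2)
    (s : Z 2 × Y × (Fin 2 → M)) :
    A.trans d x₀ (castState h s).1 (castState h s).2.1 (fun k => s.2.2 (Fin.rev (finCongr h k))) =
      castState h (A.trans 2 x₀ s.1 s.2.1 (s.2.2 ∘ Fin.rev)) := by
  subst h; rfl

theorem run_cycle (A : Algorithm X Y M Z) (x₀ : X) (t : ℕ) (i : Fin (m + 3)) :
    A.run (cycle m) (fun _ => x₀) t i = castState (cycle_deg i) (A.cycleRun x₀ t) := by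
  induction t generalizing i with
  | zero => exact castState_init A (cycle_deg i)
  | succ t ih =>
    have received : ∀ k : Fin ((cycle m).deg i),
        (A.run (cycle m) (fun _ => x₀) t ((cycle m).port i |>.symm k).1).2.2
          ((cycle m).port _ ⟨i, (cycle m).symm _ _ ((cycle m).port i |>.symm k).2⟩) =
        (A.cycleRun x₀ t).2.2 (Fin.rev (finCongr (cycle_deg i) k)) := by
      intro k
      rw [ih]
      exact congrArg (A.cycleRun x₀ t).2.2 (cycle_port_back i k)
    rw [run]
    simp only [received]
    rw [ih i]
    exact trans_castState A x₀ (cycle_deg i) _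

theorem FinalOutput.eq_of_cycle {A : Algorithm X Y M Z} {x₀ : X} {m m' : ℕ} {y y' : Y}
    (h : A.FinalOutput (cycle m) (fun _ => x₀) y)
    (h' : A.FinalOutput (cycle m') (fun _ => x₀) y') : y = y' := by
  obtain ⟨t, ht⟩ := h
  obtain ⟨t', ht'⟩ := h'
  have hy := ht (max t t') (le_max_left t t') 0
  have hy' := ht' (max t t') (le_max_right t t') 0
  rw [run_cycle] at hy hy'
  exact hy.symm.trans hy'

end Algorithm

/-- the parity-type function `(Σ_i x_i) mod k` on binary inputs
is not computable with infinite memory. -/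
theorem sum_mod_k_not_computable (k : ℕ) (hk : 2 ≤ k) :
    ¬ ComputableWithInfiniteMemory
      (fun n (x : Fin n → Fin 2) => (((∑ i, (x i : ℕ)) : ℕ) : ZMod k)) := by
  rintro ⟨M, Z, A, -, -, -, hA⟩
  have h34 := (hA 3 three_pos (PortNetwork.cycle 0) fun _ => 1).eq_of_cycle
    (hA 4 four_pos (PortNetwork.cycle 1) fun _ => 1)
  simp only [Fin.val_one, Finset.sum_const, Finset.card_univ, Fintype.card_fin, smul_eq_mul,
    mul_one, Nat.cast_ofNat] at h34
  have : Fact (1 < k) := ⟨hk⟩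
  exact one_ne_zero (by linear_combination h34.symm : (1 : ZMod k) = 0)
end
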